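/- arXiv:1604.01562 — 6 statements merged into one kernel-verified Lean document; each statement's English description precedes it below -/
import Mathlib

section
/- (1) For every prime number ℓ dividing q, there exist two distinct prime ideals P and Q of the ring ℤ[τ] such that the principal ideal generated by ℓ equals P·Q. (2) For every integer w ≥ 0, if a and b are integers with a + b·τ = τ^w or with a + b·τ = (conj τ)^w (where conj τ is the complex conjugate of τ), then gcd(a, b) = 1. -/
noncomputable section

open Complex

/-- The base τ = p/2 + i√(q − 1/4). -/
def tauC (q p : ℤ) : ℂ := (p : ℂ) / 2 + Complex.I * (Real.sqrt ((q : ℝ) - 1/4) : ℝ)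

/-- The lattice ℤ[τ] = {a + bτ : a, b ∈ ℤ} as a subset of ℂ. -/
def Ztau (q p : ℤ) : Set ℂ := {z | ∃ a b : ℤ, z = (a : ℂ) + (b : ℂ) * tauC q p}

/-- τ^k divides z within ℤ[τ]. -/
def tauPowDvd (q p : ℤ) (k : ℕ) (z : ℂ) : Prop :=
  ∃ u ∈ Ztau q p, z = (tauC q p) ^ k * u

/-- η is a nonzero digit modulo τ^w: η ∈ ℤ[τ], τ ∤ η, and η has minimal norm in
its residue class modulo τ^w. -/
def IsNonzeroDigit (q p : ℤ) (w : ℕ) (η : ℂ) : Prop :=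
  η ∈ Ztau q p ∧ ¬ tauPowDvd q p 1 η ∧
    ∀ y ∈ Ztau q p, ‖η‖ ≤ ‖η - (tauC q p) ^ w * y‖

/-- The minimal norm digit set modulo τ^w. -/
def DigitSet (q p : ℤ) (w : ℕ) : Set ℂ := {0} ∪ {η | IsNonzeroDigit q p w η}

/-- σ is a digit expansion of z with digits in the minimal norm digit set modulo τ^w. -/
def IsExpansion (q p : ℤ) (w : ℕ) (z : ℂ) (σ : ℕ → ℂ) : Prop :=
  (Function.support σ).Finite ∧ (∀ ℓ, σ ℓ ∈ DigitSet q p w) ∧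
    z = ∑ᶠ ℓ, σ ℓ * (tauC q p) ^ ℓ

/-- The (Hamming) weight of an expansion: the number of nonzero digits. -/
def expWeight (σ : ℕ → ℂ) : ℕ := (Function.support σ).ncard

/-- σ is a width-w non-adjacent form: among any w consecutive digits at most one
is nonzero. -/
def IsNAF (w : ℕ) (σ : ℕ → ℂ) : Prop :=
  ∀ ℓ i j : ℕ, i < w → j < w → σ (ℓ + i) ≠ 0 → σ (ℓ + j) ≠ 0 → i = j

/-- The Voronoi cell of 0 for ℤ[τ]. -/
def VoronoiV (q p : ℤ) : Set ℂ :=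
  {z | ∀ y ∈ Ztau q p, ‖z‖ ≤ ‖z - y‖}

/-- The vertex v₀ of the Voronoi cell. -/
def v0C (q p : ℤ) : ℂ :=
  (p : ℂ) / 2 + Complex.I * ((((q : ℝ) - 1/2) / Real.sqrt (4 * (q : ℝ) - 1) : ℝ) : ℂ)

/-- The vertex v₁ of the Voronoi cell. -/
def v1C (q : ℤ) : ℂ := Complex.I * (((q : ℝ) / Real.sqrt (4 * (q : ℝ) - 1) : ℝ) : ℂ)

/-- The direction d = p·i·τ/√q. -/
def dC (q p : ℤ) : ℂ := (p : ℂ) * Complex.I * tauC q p / ((Real.sqrt q : ℝ) : ℂ)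

/-- d_w = d·(τ/√q)^w. -/
def dwC (q p : ℤ) (w : ℕ) : ℂ := dC q p * (tauC q p / ((Real.sqrt q : ℝ) : ℂ)) ^ w

/-- The height s of the rectangle R_w. -/
def sHeight (q : ℤ) : ℝ := Real.sqrt (((q : ℝ) - 1/4) / ((q : ℝ) + 2))

/-- The open rectangle R_w. -/
def Rw (q p : ℤ) (w : ℕ) : Set ℂ :=
  {z | ∃ t u : ℝ,
    Real.sqrt q < t ∧ t < Real.sqrt ((q : ℝ) ^ (w + 1) / (4 * (q : ℝ) - 1)) - Real.sqrt q ∧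
    0 < u ∧ u < sHeight q ∧
    z = (tauC q p) ^ w * v0C q p + (t : ℂ) * dwC q p w
        - (p : ℂ) * Complex.I * (u : ℂ) * dwC q p w}

/-- The lattice Λ_{τ/2} = {(aτ + bτ²)/2 : a, b ∈ ℤ}. -/
def LambdaHalf (q p : ℤ) : Set ℂ :=
  {z | ∃ a b : ℤ, z = ((a : ℂ) * tauC q p + (b : ℂ) * (tauC q p) ^ 2) / 2}

/-- The unit e_w = τ^{w+1}/q^{(w+1)/2}. -/
def ewC (q p : ℤ) (w : ℕ) : ℂ :=
  (tauC q p) ^ (w + 1) / (((q : ℝ) ^ (((w : ℝ) + 1) / 2) : ℝ) : ℂ)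

/-- The closed rectangle R̃_NH (narrow but high). -/
def RNH (q p : ℤ) (w : ℕ) : Set ℂ :=
  {z | ∃ t u : ℝ,
    0 ≤ t ∧ t ≤ sHeight q / (4 * (q : ℝ)) ∧
    |u| ≤ (q : ℝ) ^ 2 * Real.sqrt ((q : ℝ) + 2) ∧
    z = (tauC q p) ^ (w + 1) / 2 + ewC q p w * ((t : ℂ) + Complex.I * (u : ℂ))}

/-- The closed rectangle R̃_WL (wide but low). -/
def RWL (q p : ℤ) (w : ℕ) : Set ℂ :=
  {z | ∃ t u : ℝ,
    0 ≤ t ∧ t ≤ 4 * (q : ℝ) ^ ((3 - (w : ℝ)) / 2) * ((q : ℝ) - 1/4) ∧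
    |u| ≤ (q : ℝ) ^ (((w : ℝ) + 1) / 2) / (16 * (q : ℝ) * Real.sqrt ((q : ℝ) - 1/4)) ∧
    z = (tauC q p) ^ (w + 1) / 2 + ewC q p w * ((t : ℂ) + Complex.I * (u : ℂ))}

/-!
Since `τ` is not real, a polynomial remainder `a + bX` vanishing at `τ` is zero, so `ℤ[τ]` is
`ℤ[X]` modulo `f = X² - pX + q`. For a prime `ℓ ∣ q`, `f ≡ X (X - p) mod ℓ`, so
`(ℓ, τ)` and `(ℓ, τ - p)` are primes (preimages of `(ℓ, X)` and `(ℓ, X - p)`); their product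
contains `ℓ τ - ℓ (τ - p) = ℓ p` with `p` a unit, and `τ (τ - p) = -q` is divisible by `ℓ`, so it
is `(ℓ)`; the two primes differ because their sum contains the unit `p`.

For the coordinates, `τ + τ̄ = p` is a unit, so `τ ^ w` and `τ̄ ^ w = (p - τ) ^ w` are coprime in
`ℤ[τ]`. Up to order they are `a + bτ` and its conjugate `a + b(p - τ)`, both divisible by
`gcd(a, b)`, which is therefore a unit of `ℤ[τ]`, hence of `ℤ`.
-/

open Polynomial

theorem Ideal.span_pair_mul_span_pair_eq_span_singleton {R : Type*} [CommRing R] {ℓ t s : R}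
    (hdvd : ℓ ∣ t * s) (hunit : IsUnit (t - s)) :
    Ideal.span {ℓ, t} * Ideal.span {ℓ, s} = Ideal.span {ℓ} := by
  rw [Ideal.span_pair_mul_span_pair]
  apply le_antisymm
  · simp only [Ideal.span_le, Set.insert_subset_iff, Set.singleton_subset_iff, SetLike.mem_coe,
      Ideal.mem_span_singleton]
    exact ⟨dvd_mul_right ℓ ℓ, dvd_mul_right ℓ s, dvd_mul_left ℓ t, hdvd⟩
  · obtain ⟨u, hu⟩ := hunit.exists_left_inv
    have hmem : u * (t * ℓ) - u * (ℓ * s) ∈ Ideal.span {ℓ * ℓ, ℓ * s, t * ℓ, t * s} :=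
      Ideal.sub_mem _ (Ideal.mul_mem_left _ _ (Ideal.subset_span (by simp)))
        (Ideal.mul_mem_left _ _ (Ideal.subset_span (by simp)))
    rw [Ideal.span_singleton_le_iff_mem]
    convert hmem using 1
    linear_combination -ℓ * hu

theorem Polynomial.span_C_X_sub_C_eq_comap_evalRingHom {R : Type*} [CommRing R] (ℓ a : R) :
    Ideal.span {C ℓ, X - C a} = (Ideal.span {ℓ}).comap (evalRingHom a) := by
  apply le_antisymm
  · simp [Ideal.span_le, Set.insert_subset_iff]
  · intro g hg
    obtain ⟨k, hk⟩ : ℓ ∣ g.eval a := Ideal.mem_span_singleton.mp hg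
    obtain ⟨h, hh⟩ := (X_sub_C_dvd_sub_C_eval : X - C a ∣ g - C (g.eval a))
    have hg : g = (X - C a) * h + C ℓ * C k := by
      rw [← C_mul, ← hk]
      linear_combination hh
    rw [hg]
    exact Ideal.add_mem _ (Ideal.mul_mem_right _ _ (Ideal.subset_span (by simp)))
      (Ideal.mul_mem_right _ _ (Ideal.subset_span (by simp)))

theorem Polynomial.isPrime_span_C_X_sub_C {R : Type*} [CommRing R] {ℓ : R} (hℓ : Prime ℓ)
    (a : R) : (Ideal.span {C ℓ, X - C a}).IsPrime := by
  have := (Ideal.span_singleton_prime hℓ.ne_zero).mpr hℓ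
  rw [span_C_X_sub_C_eq_comap_evalRingHom]
  exact Ideal.comap_isPrime _ _

def tauPoly (q p : ℤ) : ℤ[X] := X ^ 2 - C p * X + C q

def tauAdj (q p : ℤ) : Algebra.adjoin ℤ ({tauC q p} : Set ℂ) :=
  ⟨tauC q p, Algebra.subset_adjoin rfl⟩

section Tau

variable {q p : ℤ}

local notation "𝒪" => Algebra.adjoin ℤ ({tauC q p} : Set ℂ)

theorem tauC_im : (tauC q p).im = √((q : ℝ) - 1/4) := by
  simp [tauC]

theorem tauC_sq (hq : 0 < q) (hp : p = -1 ∨ p = 1) : tauC q p ^ 2 = p * tauC q p - q := by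
  have hq' : (0 : ℝ) ≤ q - 1/4 := by
    have : (1 : ℝ) ≤ q := by exact_mod_cast hq
    linarith
  have hsqrt : ((√((q : ℝ) - 1/4) : ℝ) : ℂ) ^ 2 = q - 1/4 := by
    rw [← Complex.ofReal_pow, Real.sq_sqrt hq']
    push_cast; ring
  have hp2 : (p : ℂ) ^ 2 = 1 := by rcases hp with rfl | rfl <;> simp
  unfold tauC
  linear_combination ((√((q : ℝ) - 1/4) : ℝ) : ℂ) ^ 2 * Complex.I_sq - hsqrt - 1/4 * hp2

theorem conj_tauC : starRingEnd ℂ (tauC q p) = p - tauC q p := by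
  simp only [tauC, map_add, map_mul, map_div₀, Complex.conj_I, Complex.conj_ofReal, map_intCast,
    map_ofNat]
  ring

theorem intCast_add_mul_tauC_inj (hq : 0 < q) {a b a' b' : ℤ}
    (h : (a : ℂ) + b * tauC q p = a' + b' * tauC q p) : a = a' ∧ b = b' := by
  have him : 0 < (tauC q p).im := by
    rw [tauC_im, Real.sqrt_pos]
    have : (1 : ℝ) ≤ q := by exact_mod_cast hq
    linarith
  have hb : b = b' := by
    have := congrArg Complex.im h
    simp only [Complex.add_im, Complex.mul_im, Complex.intCast_re, Complex.intCast_im, zero_mul,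
      add_zero, zero_add] at this
    exact_mod_cast mul_right_cancel₀ him.ne' this
  subst hb
  exact ⟨by exact_mod_cast add_right_cancel h, rfl⟩

theorem tauPoly_monic : (tauPoly q p).Monic := by
  unfold tauPoly
  monicity!

theorem degree_tauPoly : (tauPoly q p).degree = 2 := by
  unfold tauPoly
  compute_degree!

theorem aeval_tauC_tauPoly (hq : 0 < q) (hp : p = -1 ∨ p = 1) :
    aeval (tauC q p) (tauPoly q p) = 0 := by
  simp only [tauPoly, eq_intCast, map_add, map_sub, map_pow, aeval_X, map_mul, map_intCast]
  linear_combination tauC_sq hq hp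

theorem degree_modByMonic_tauPoly_le (g : ℤ[X]) : (g %ₘ tauPoly q p).degree ≤ 1 := by
  have := degree_modByMonic_lt g (tauPoly_monic (q := q) (p := p))
  rw [degree_tauPoly] at this
  exact Order.le_of_lt_succ this

theorem aeval_tauC_eq_coeff_modByMonic (hq : 0 < q) (hp : p = -1 ∨ p = 1) (g : ℤ[X]) :
    aeval (tauC q p) g =
      (g %ₘ tauPoly q p).coeff 0 + (g %ₘ tauPoly q p).coeff 1 * tauC q p := by
  rw [← aeval_modByMonic_eq_self_of_root (aeval_tauC_tauPoly hq hp)]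
  conv_lhs => rw [eq_X_add_C_of_degree_le_one (degree_modByMonic_tauPoly_le g)]
  simp only [eq_intCast, map_add, map_mul, map_intCast, aeval_X]
  ring

theorem tauPoly_dvd_of_aeval_tauC_eq_zero (hq : 0 < q) (hp : p = -1 ∨ p = 1) {g : ℤ[X]}
    (hg : aeval (tauC q p) g = 0) : tauPoly q p ∣ g := by
  rw [aeval_tauC_eq_coeff_modByMonic hq hp] at hg
  obtain ⟨h0, h1⟩ := intCast_add_mul_tauC_inj hq (a' := 0) (b' := 0) (by simpa using hg)
  rw [← modByMonic_eq_zero_iff_dvd tauPoly_monic,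
    eq_X_add_C_of_degree_le_one (degree_modByMonic_tauPoly_le g), h0, h1]
  simp

theorem mem_Ztau_of_mem_adjoin (hq : 0 < q) (hp : p = -1 ∨ p = 1) {z : ℂ}
    (hz : z ∈ 𝒪) : z ∈ Ztau q p := by
  rw [Algebra.adjoin_singleton_eq_range_aeval] at hz
  obtain ⟨g, rfl⟩ := hz
  exact ⟨_, _, aeval_tauC_eq_coeff_modByMonic hq hp g⟩

@[simp]
theorem coe_tauAdj : (tauAdj q p : ℂ) = tauC q p := rfl

theorem aeval_tauAdj_surjective : Function.Surjective (aeval (R := ℤ) (tauAdj q p)) := by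
  rintro ⟨z, hz⟩
  rw [Algebra.adjoin_singleton_eq_range_aeval] at hz
  obtain ⟨g, hg⟩ := hz
  exact ⟨g, Subtype.ext ((aeval_subalgebra_coe g _ _).trans hg)⟩

theorem ker_aeval_tauAdj_le (hq : 0 < q) (hp : p = -1 ∨ p = 1) {I : Ideal ℤ[X]}
    (hI : tauPoly q p ∈ I) : RingHom.ker (aeval (tauAdj q p)) ≤ I := by
  intro g hg
  have hτ : aeval (tauC q p) g = 0 := by
    rw [← coe_tauAdj, ← aeval_subalgebra_coe, RingHom.mem_ker.mp hg]
    rfl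
  obtain ⟨h, rfl⟩ := tauPoly_dvd_of_aeval_tauC_eq_zero hq hp hτ
  exact I.mul_mem_right h hI

theorem isPrime_span_natCast_tauAdj_sub (hq : 0 < q) (hp : p = -1 ∨ p = 1) {ℓ : ℕ}
    (hℓ : ℓ.Prime) {a : ℤ} (ha : (ℓ : ℤ) ∣ (tauPoly q p).eval a) :
    (Ideal.span {(ℓ : 𝒪), tauAdj q p - a}).IsPrime := by
  have hI : tauPoly q p ∈ Ideal.span {C (ℓ : ℤ), X - C a} := by
    rw [span_C_X_sub_C_eq_comap_evalRingHom]
    exact Ideal.mem_span_singleton.mpr ha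
  have := Ideal.map_isPrime_of_surjective aeval_tauAdj_surjective (ker_aeval_tauAdj_le hq hp hI)
    (H := isPrime_span_C_X_sub_C (Nat.prime_iff_prime_int.mp hℓ) a)
  simpa [Ideal.map_span, Set.image_pair] using this

theorem tauAdj_mul_tauAdj_sub (hq : 0 < q) (hp : p = -1 ∨ p = 1) :
    tauAdj q p * (tauAdj q p - p) = -q :=
  Subtype.ext (by push_cast [coe_tauAdj]; linear_combination tauC_sq hq hp)

theorem exists_isPrime_span_natCast_eq_mul (hq : 0 < q) (hp : p = -1 ∨ p = 1) {ℓ : ℕ}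
    (hℓ : ℓ.Prime) (hdvd : (ℓ : ℤ) ∣ q) :
    ∃ P Q : Ideal 𝒪, P.IsPrime ∧ Q.IsPrime ∧ P ≠ Q ∧ Ideal.span {(ℓ : 𝒪)} = P * Q := by
  have hP := isPrime_span_natCast_tauAdj_sub hq hp hℓ (a := 0) (by simpa [tauPoly] using hdvd)
  have hQ := isPrime_span_natCast_tauAdj_sub hq hp hℓ (a := p) (by simpa [tauPoly, sq] using hdvd)
  rw [Int.cast_zero, sub_zero] at hP
  have hunit : IsUnit (tauAdj q p - (tauAdj q p - p)) := by
    rw [sub_sub_cancel]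
    rcases hp with rfl | rfl <;> simp
  refine ⟨_, _, hP, hQ, fun hPQ ↦ hP.ne_top ?_,
    (Ideal.span_pair_mul_span_pair_eq_span_singleton ?_ hunit).symm⟩
  · refine Ideal.eq_top_of_isUnit_mem _ (Ideal.sub_mem _ (Ideal.subset_span (by simp)) ?_) hunit
    exact hPQ ▸ Ideal.subset_span (by simp)
  · rw [tauAdj_mul_tauAdj_sub hq hp, dvd_neg]
    exact_mod_cast _root_.map_dvd (Int.castRingHom _) hdvd

theorem isCoprime_tauAdj_pow (hp : p = -1 ∨ p = 1) (w : ℕ) :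
    IsCoprime (tauAdj q p ^ w) ((p - tauAdj q p) ^ w) := by
  have : IsCoprime (tauAdj q p) (p - tauAdj q p) := ⟨p, p, by rcases hp with rfl | rfl <;> ring⟩
  exact this.pow

theorem isUnit_of_isUnit_intCast_adjoin (hq : 0 < q) (hp : p = -1 ∨ p = 1) {d : ℤ}
    (hd : IsUnit (d : 𝒪)) : IsUnit d := by
  obtain ⟨u, hu⟩ := hd.exists_right_inv
  obtain ⟨x, y, hxy⟩ := mem_Ztau_of_mem_adjoin hq hp u.2
  have h : ((d * x : ℤ) : ℂ) + (d * y : ℤ) * tauC q p = (1 : ℤ) + (0 : ℤ) * tauC q p := by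
    have := congrArg Subtype.val hu
    push_cast at this ⊢
    rw [← this, hxy]
    ring
  exact IsUnit.of_mul_eq_one x (intCast_add_mul_tauC_inj hq h).1

theorem gcd_eq_one_of_add_mul_tauC_eq_pow (hq : 0 < q) (hp : p = -1 ∨ p = 1) {w : ℕ}
    {a b : ℤ} (h : (a : ℂ) + b * tauC q p = tauC q p ^ w ∨
      (a : ℂ) + b * tauC q p = starRingEnd ℂ (tauC q p) ^ w) :
    Int.gcd a b = 1 := by
  set t := tauAdj q p
  have hconj {z : ℂ} (hz : (a : ℂ) + b * tauC q p = z) :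
      (a : ℂ) + b * (p - tauC q p) = starRingEnd ℂ z := by
    simp [← hz, conj_tauC]
  have hcoprime : IsCoprime (a + b * t) (a + b * (p - t)) := by
    rcases h with h | h
    · convert isCoprime_tauAdj_pow (q := q) hp w using 1 <;> refine Subtype.ext ?_
      · simpa [t] using h
      · simpa [t, conj_tauC] using hconj h
    · convert (isCoprime_tauAdj_pow (q := q) hp w).symm using 1 <;> refine Subtype.ext ?_
      · simpa [t, conj_tauC] using h
      · simpa [t] using hconj h
  have hdvd (c : 𝒪) : ((Int.gcd a b : ℤ) : 𝒪) ∣ a + b * c :=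
    dvd_add (_root_.map_dvd (Int.castRingHom _) (Int.gcd_dvd_left a b))
      (dvd_mul_of_dvd_left (_root_.map_dvd (Int.castRingHom _) (Int.gcd_dvd_right a b)) _)
  have hunit := isUnit_of_isUnit_intCast_adjoin hq hp (hcoprime.isUnit_of_dvd' (hdvd _) (hdvd _))
  simpa using Int.isUnit_iff_natAbs_eq.mp hunit

end Tau

/-- splitting of primes dividing q in ℤ[τ], and coprimality of the
coordinates of τ^w and (conj τ)^w. -/
theorem stmt5 (q p : ℤ) (hq : 2 ≤ q) (hp : p = -1 ∨ p = 1) :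
    (∀ ℓ : ℕ, ℓ.Prime → (ℓ : ℤ) ∣ q →
      ∃ P Q : Ideal (Algebra.adjoin ℤ ({tauC q p} : Set ℂ)),
        P.IsPrime ∧ Q.IsPrime ∧ P ≠ Q ∧
        Ideal.span {(ℓ : Algebra.adjoin ℤ ({tauC q p} : Set ℂ))} = P * Q) ∧
    (∀ w : ℕ, ∀ a b : ℤ,
      ((a : ℂ) + (b : ℂ) * tauC q p = (tauC q p) ^ w ∨
        (a : ℂ) + (b : ℂ) * tauC q p = ((starRingEnd ℂ) (tauC q p)) ^ w) →
      Int.gcd a b = 1) := by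
  have hq' : 0 < q := by omega
  exact ⟨fun _ hℓ hdvd ↦ exists_isPrime_span_natCast_eq_mul hq' hp hℓ hdvd,
    fun _ _ _ h ↦ gcd_eq_one_of_add_mul_tauC_eq_pow hq' hp h⟩
end
end

section
/- For a real number x let ‖x‖ denote its distance to the nearest integer. Let ε = (2/π)·arg(τ) and, for fixed integers a, b with a + b·τ ≠ 0, let δ = (2/π)·arg(a + b·τ). Suppose w_q is a positive real number such that for all integers w ≥ w_q and all integers k, it is not the case that both |Log((a + b·τ)/|a + b·τ|) − w·Log(τ/|τ|) + k·i·π/2| < 9·q^{2 − w/2} and |a + b·τ| < 4·q² hold. Let Q be a positive integer and set κ = w_q·‖Q·ε‖; suppose 0 < κ < 1/4 and ‖Q·δ‖ > 2κ. Then for all integers w ≥ (2/log q)·log(18·Q/(κ·π)) + 4 and all integers k, it is not the case that both |Log((a + b·τ)/|a + b·τ|) − w·Log(τ/|τ|) + k·i·π/2| < 9·q^{2 − w/2} and |a + b·τ| < 4·q² hold (log is the natural logarithm). -/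
noncomputable section

open Complex

/-- Distance of a real number to the nearest integer. -/
def nearestIntDist (x : ℝ) : ℝ := |x - round x|

/-- The pair of inequalities (Main_Log_Form). -/
def MainIneq (q p a b k w : ℤ) : Prop :=
  ‖Complex.log (((a : ℂ) + (b : ℂ) * tauC q p) /
        ((‖(a : ℂ) + (b : ℂ) * tauC q p‖ : ℝ) : ℂ)) -
      (w : ℂ) * Complex.log (tauC q p / ((‖tauC q p‖ : ℝ) : ℂ)) +
      (k : ℂ) * Complex.I * (Real.pi : ℂ) / 2‖ <
    9 * (q : ℝ) ^ ((2 : ℝ) - (w : ℝ) / 2) ∧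
  ‖(a : ℂ) + (b : ℂ) * tauC q p‖ < 4 * (q : ℝ) ^ 2

/-!
Only the range `w < w_q` needs an argument. There the imaginary part of the linear form gives
`|arg z - w arg τ + kπ/2| < 9 q^{2 - w/2}`; multiplied by `2Q/π` this reads
`|Qδ - w Qε + Qk| < κ`, the lower bound on `w` being exactly what makes the right-hand side at
most `κ`. Since `w ‖Qε‖ < w_q ‖Qε‖ = κ`, the integer `w·round(Qε) - Qk` is then within `2κ` of
`Qδ`, contradicting `‖Qδ‖ > 2κ`.
-/

theorem Complex.arg_div_norm (z : ℂ) : arg (z / (‖z‖ : ℂ)) = arg z := by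
  rcases eq_or_ne z 0 with rfl | hz
  · simp
  rw [div_eq_inv_mul, ← ofReal_inv]
  exact arg_real_mul z (inv_pos.mpr (norm_pos_iff.mpr hz))

theorem abs_arg_sub_mul_arg_add_le_norm (z u : ℂ) (w k : ℤ) :
    |arg z - w * arg u + k * Real.pi / 2| ≤
      ‖log (z / (‖z‖ : ℂ)) - w * log (u / (‖u‖ : ℂ)) + k * I * Real.pi / 2‖ := by
  have him : (log (z / (‖z‖ : ℂ)) - w * log (u / (‖u‖ : ℂ)) + k * I * Real.pi / 2).im =
      arg z - w * arg u + k * Real.pi / 2 := by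
    simp [log_im, arg_div_norm]
  rw [← him]
  exact abs_im_le_norm _

theorem mul_rpow_two_sub_half_le_one {q C w : ℝ} (hq : 1 < q) (hC : 0 < C)
    (hw : 2 / Real.log q * Real.log C + 4 ≤ w) : C * q ^ (2 - w / 2) ≤ 1 := by
  have hlogC : Real.log C ≤ (w / 2 - 2) * Real.log q := by
    rw [div_mul_eq_mul_div, ← le_sub_iff_add_le, div_le_iff₀ (Real.log_pos hq)] at hw
    linarith
  calc C * q ^ (2 - w / 2) = Real.exp (Real.log C + (2 - w / 2) * Real.log q) := by
        rw [Real.exp_add, Real.exp_log hC, Real.rpow_def_of_pos (by linarith), mul_comm (2 - w / 2)]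
    _ ≤ Real.exp 0 := Real.exp_le_exp.mpr (by linarith)
    _ = 1 := Real.exp_zero

theorem nearestIntDist_le_abs_sub_mul_add (x y : ℝ) (n m : ℤ) :
    nearestIntDist x ≤ |x - n * y + m| + |(n : ℝ)| * nearestIntDist y := by
  calc nearestIntDist x ≤ |x - ((n * round y - m : ℤ) : ℝ)| := round_le x _
    _ = |(x - n * y + m) + n * (y - round y)| := by push_cast; congr 1; ring
    _ ≤ |x - n * y + m| + |(n : ℝ)| * nearestIntDist y := by
        rw [nearestIntDist, ← abs_mul]; exact abs_add_le _ _

theorem nearestIntDist_lt_two_mul_of_abs_sub_mul_add_lt {x y κ wq : ℝ} {n m : ℤ}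
    (hn : (0 : ℝ) ≤ n) (hnwq : n < wq) (hκ : κ = wq * nearestIntDist y) (hκpos : 0 < κ)
    (hform : |x - n * y + m| < κ) :
    nearestIntDist x < 2 * κ := by
  have hy : 0 < nearestIntDist y := pos_of_mul_pos_right (hκ ▸ hκpos) (hn.trans hnwq.le)
  have hny : n * nearestIntDist y < κ := hκ ▸ mul_lt_mul_of_pos_right hnwq hy
  have hround := nearestIntDist_le_abs_sub_mul_add x y n m
  rw [abs_of_nonneg hn] at hround
  linarith

theorem stmt9_general (q p : ℤ) (hq : 2 ≤ q)
    (a b : ℤ)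
    (wq : ℝ)
    (hwqbound : ∀ w k : ℤ, wq ≤ (w : ℝ) → ¬ MainIneq q p a b k w)
    (Q : ℕ) (κ : ℝ)
    (hκ : κ = wq * nearestIntDist ((Q : ℝ) * (2 / Real.pi * Complex.arg (tauC q p))))
    (hκpos : 0 < κ) (hκlt : κ < 1/4)
    (hδ : 2 * κ <
      nearestIntDist ((Q : ℝ) * (2 / Real.pi * Complex.arg ((a : ℂ) + (b : ℂ) * tauC q p)))) :
    ∀ w k : ℤ,
      2 / Real.log q * Real.log (18 * (Q : ℝ) / (κ * Real.pi)) + 4 ≤ (w : ℝ) →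
      ¬ MainIneq q p a b k w := by
  intro w k hw hmain
  rcases le_or_gt wq (w : ℝ) with hw_large | hw_small
  · exact hwqbound w k hw_large hmain
  set z := (a : ℂ) + (b : ℂ) * tauC q p
  set Qδ := (Q : ℝ) * (2 / Real.pi * arg z)
  set Qε := (Q : ℝ) * (2 / Real.pi * arg (tauC q p))
  have hq1 : (1 : ℝ) < q := by exact_mod_cast hq
  have hQ : (1 : ℝ) ≤ Q := by
    rcases Nat.eq_zero_or_pos Q with rfl | hQ
    · simp [Qδ, nearestIntDist] at hδ; linarith
    · exact_mod_cast hQ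
  have hC : 1 ≤ 18 * (Q : ℝ) / (κ * Real.pi) := by
    rw [le_div_iff₀ (by positivity)]
    nlinarith [Real.pi_lt_four]
  have hw0 : (0 : ℝ) ≤ w := by
    have := mul_nonneg (div_nonneg zero_le_two (Real.log_pos hq1).le) (Real.log_nonneg hC)
    linarith
  have hsmall := mul_rpow_two_sub_half_le_one hq1 (by linarith) hw
  have hform : |Qδ - w * Qε + (Q * k : ℤ)| < κ := by
    calc |Qδ - w * Qε + (Q * k : ℤ)|
        = 2 * Q / Real.pi * |arg z - w * arg (tauC q p) + k * Real.pi / 2| := by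
          rw [← abs_of_pos (by positivity : 0 < 2 * (Q : ℝ) / Real.pi), ← abs_mul]
          congr 1; simp only [Qδ, Qε]; push_cast; field_simp
      _ < 2 * Q / Real.pi * (9 * (q : ℝ) ^ ((2 : ℝ) - (w : ℝ) / 2)) := by
          gcongr
          exact (abs_arg_sub_mul_arg_add_le_norm _ _ w k).trans_lt hmain.1
      _ = κ * (18 * Q / (κ * Real.pi) * (q : ℝ) ^ ((2 : ℝ) - (w : ℝ) / 2)) := by
          field_simp; ring
      _ ≤ κ := mul_le_of_le_one_right hκpos.le hsmall
  exact hδ.not_gt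
    (nearestIntDist_lt_two_mul_of_abs_sub_mul_add_lt hw0 hw_small hκ hκpos hform)

/-- the Baker–Davenport reduction step. -/
theorem stmt9 (q p : ℤ) (hq : 2 ≤ q) (hp : p = -1 ∨ p = 1)
    (a b : ℤ) (hab : (a : ℂ) + (b : ℂ) * tauC q p ≠ 0)
    (wq : ℝ) (hwq : 0 < wq)
    (hwqbound : ∀ w k : ℤ, wq ≤ (w : ℝ) → ¬ MainIneq q p a b k w)
    (Q : ℕ) (hQ : 0 < Q) (κ : ℝ)
    (hκ : κ = wq * nearestIntDist ((Q : ℝ) * (2 / Real.pi * Complex.arg (tauC q p))))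
    (hκpos : 0 < κ) (hκlt : κ < 1/4)
    (hδ : 2 * κ <
      nearestIntDist ((Q : ℝ) * (2 / Real.pi * Complex.arg ((a : ℂ) + (b : ℂ) * tauC q p)))) :
    ∀ w k : ℤ,
      2 / Real.log q * Real.log (18 * (Q : ℝ) / (κ * Real.pi)) + 4 ≤ (w : ℝ) →
      ¬ MainIneq q p a b k w :=
  stmt9_general q p hq a b wq hwqbound Q κ hκ hκpos hκlt hδ
end
end

section
/- Let w ≥ 2 be an integer. For every z ∈ ℤ[τ] not divisible by τ, there exists a unique u ∈ ℤ[τ] with u − z ∈ τ^w·ℤ[τ] such that |u| ≤ |u'| for every u' ∈ ℤ[τ] with u' − z ∈ τ^w·ℤ[τ]; that is, each residue class modulo τ^w not divisible by τ contains a unique element of minimal absolute value. -/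
noncomputable section

open Complex

/-!
Identify ℤ[τ] with `QuadraticAlgebra ℤ (-q) p`, in which `|x|²` becomes the integral norm.
Minimal elements of a residue class exist because norms are natural numbers. If `u` and
`u + τ^w μ` are both minimal, the parallelogram identity shows that `0` and `μ` are both closest
lattice points to `μ / 2`, which forces `μ ∈ {0, ±1, ±τ, ±τ̄}`. For `μ ≠ 0` this gives
`τ^w μ = n τ^k` with `n ≠ 0` and `k ≥ 1` (for `±τ̄` via `τ τ̄ = q` and `w ≥ 2`), and equality of
norms turns into `trace (u τ̄^k) = -n q^k ≡ 0 (mod q)`. Reducing modulo `τ`, where `τ̄ ↦ p` is a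
unit, yields `τ ∣ u`.
-/

open QuadraticAlgebra

namespace QuadraticAlgebra

section CommRing

variable {R : Type*} [CommRing R] {a b : R}

theorem norm_add (x y : QuadraticAlgebra R a b) :
    (x + y).norm = x.norm + trace (x * star y) + y.norm := by
  simp only [norm_def, trace_def, re_add, im_add, re_mul, im_mul, re_star, im_star]
  ring

theorem norm_add_mul_add_norm_add_mul_sub (u t y μ : QuadraticAlgebra R a b) :
    (u + t * y).norm + (u + t * (μ - y)).norm =
      u.norm + (u + t * μ).norm + t.norm * (y.norm + (μ - y).norm - μ.norm) := by
  simp only [norm_def, re_add, im_add, re_sub, im_sub, re_mul, im_mul]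
  ring

end CommRing

section Ordered

variable {R : Type*} [CommRing R] [LinearOrder R] [IsStrictOrderedRing R] {a b : R}

/-- In Euclidean terms: if `u / t` and `u / t + μ` lie in the Voronoi cell of the lattice, then
so does `μ / 2`. -/
theorem norm_le_norm_add_norm_sub_of_forall_norm_le {u t μ : QuadraticAlgebra R a b}
    (ht : 0 < t.norm) (hmin : ∀ y, u.norm ≤ (u + t * y).norm) (hμ : (u + t * μ).norm = u.norm)
    (y : QuadraticAlgebra R a b) : μ.norm ≤ y.norm + (μ - y).norm := by
  have h := norm_add_mul_add_norm_add_mul_sub u t y μ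
  have h₁ := hmin y
  have h₂ := hmin (μ - y)
  have : 0 ≤ t.norm * (y.norm + (μ - y).norm - μ.norm) := by linarith
  linarith [nonneg_of_mul_nonneg_right this ht]

end Ordered

theorem exists_forall_norm_add_mul_le {a b : ℤ} (hN : ∀ x : QuadraticAlgebra ℤ a b, 0 ≤ x.norm)
    (z t : QuadraticAlgebra ℤ a b) : ∃ y₀, ∀ y, (z + t * y₀).norm ≤ (z + t * y).norm := by
  refine ⟨Function.argmin fun y ↦ (z + t * y).norm.toNat, fun y ↦ ?_⟩
  have h := Function.argmin_le (fun y ↦ (z + t * y).norm.toNat) y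
  have h₁ := hN (z + t * Function.argmin fun y ↦ (z + t * y).norm.toNat)
  have h₂ := hN (z + t * y)
  omega

end QuadraticAlgebra

section MinimalRepresentatives

variable {q p : ℤ}

theorem norm_omega : (ω : QuadraticAlgebra ℤ (-q) p).norm = q := by
  simp [QuadraticAlgebra.norm_def]

theorem omega_mul_star_omega :
    (ω : QuadraticAlgebra ℤ (-q) p) * star ω = (q : QuadraticAlgebra ℤ (-q) p) := by
  ext <;> simp

/-- The lattice vectors `μ` for which `0` and `μ` are both nearest lattice points to `μ / 2`. -/
theorem eq_of_norm_le_norm_add_norm_sub (hq : 2 ≤ q) (hp : p = -1 ∨ p = 1)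
    {μ : QuadraticAlgebra ℤ (-q) p} (h : ∀ y, μ.norm ≤ y.norm + (μ - y).norm) :
    μ = 0 ∨ μ = 1 ∨ μ = -1 ∨ μ = ω ∨ μ = -ω ∨ μ = star ω ∨ μ = -star ω := by
  obtain ⟨c, d⟩ := μ
  have h₁ := h 1
  have h₂ := h (-1)
  have h₃ := h ω
  have h₄ := h (-ω)
  simp only [QuadraticAlgebra.norm_def, re_sub, im_sub, re_neg, im_neg, re_one, im_one,
    omega_re, omega_im] at h₁ h₂ h₃ h₄
  have hd : -1 ≤ d ∧ d ≤ 1 := by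
    rcases hp with rfl | rfl <;> constructor <;> nlinarith
  have hc : -1 ≤ c ∧ c ≤ 1 := by
    rcases hp with rfl | rfl <;> constructor <;> nlinarith
  obtain ⟨hd₁, hd₂⟩ := hd
  obtain ⟨hc₁, hc₂⟩ := hc
  interval_cases d <;> interval_cases c <;> rcases hp with rfl | rfl <;>
    first
    | (exfalso; nlinarith)
    | simp [QuadraticAlgebra.ext_iff]

theorem intCast_zmod_natAbs_eq_zero_iff_dvd {n : ℤ} : (n : ZMod q.natAbs) = 0 ↔ q ∣ n := by
  rw [ZMod.intCast_zmod_eq_zero_iff_dvd, Int.natAbs_dvd]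

def reduceModOmega (q p : ℤ) : QuadraticAlgebra ℤ (-q) p →ₐ[ℤ] ZMod q.natAbs :=
  lift (A := ZMod q.natAbs) ⟨0, by simp [intCast_zmod_natAbs_eq_zero_iff_dvd.2 (dvd_refl q)]⟩

theorem reduceModOmega_apply (x : QuadraticAlgebra ℤ (-q) p) :
    reduceModOmega q p x = x.re := by
  simp [reduceModOmega]

theorem reduceModOmega_omega : reduceModOmega q p ω = 0 := by
  simp [reduceModOmega_apply]

theorem reduceModOmega_star_omega : reduceModOmega q p (star ω) = p := by
  simp [reduceModOmega_apply]

theorem omega_dvd_of_reduceModOmega_eq_zero {x : QuadraticAlgebra ℤ (-q) p}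
    (hx : reduceModOmega q p x = 0) : ω ∣ x := by
  obtain ⟨m, hm⟩ := intCast_zmod_natAbs_eq_zero_iff_dvd.1 ((reduceModOmega_apply x).symm.trans hx)
  exact ⟨⟨x.im + p * m, -m⟩, by ext <;> simp [hm]⟩

theorem reduceModOmega_trace_mul_star_omega_pow (x : QuadraticAlgebra ℤ (-q) p) {k : ℕ}
    (hk : k ≠ 0) :
    ((trace (x * star (ω ^ k)) : ℤ) : ZMod q.natAbs) = reduceModOmega q p x * p ^ k := by
  have h := congrArg (reduceModOmega q p) (algebraMap_trace_eq_add_star (x * star (ω ^ k)))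
  simpa [star_pow, reduceModOmega_omega, reduceModOmega_star_omega, hk] using h

theorem norm_add_intCast_mul_omega_pow_ne (hp : p ^ 2 = 1) {x : QuadraticAlgebra ℤ (-q) p}
    (hx : reduceModOmega q p x ≠ 0) {n : ℤ} (hn : n ≠ 0) {k : ℕ} (hk : k ≠ 0) :
    (x + (n : QuadraticAlgebra ℤ (-q) p) * ω ^ k).norm ≠ x.norm := by
  intro h
  have htrace : trace (x * star (ω ^ k)) = -(n * q ^ k) := by
    have hmul : x * star ((n : QuadraticAlgebra ℤ (-q) p) * ω ^ k) = n • (x * star (ω ^ k)) := by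
      rw [star_mul, star_intCast, zsmul_eq_mul]; ring
    rw [norm_add, hmul, map_zsmul, map_mul QuadraticAlgebra.norm, map_pow, norm_omega,
      QuadraticAlgebra.norm_intCast, smul_eq_mul] at h
    exact mul_left_cancel₀ hn (by linear_combination h)
  have h₀ : reduceModOmega q p x * p ^ k = 0 := by
    rw [← reduceModOmega_trace_mul_star_omega_pow x hk, htrace]
    push_cast
    simp [intCast_zmod_natAbs_eq_zero_iff_dvd.2 (dvd_refl q), hk]
  have hpk : ((p : ZMod q.natAbs) ^ k) ^ 2 = 1 := by
    have hp' : (p : ZMod q.natAbs) ^ 2 = 1 := by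
      exact_mod_cast congrArg (Int.cast : ℤ → ZMod q.natAbs) hp
    rw [← pow_mul, mul_comm, pow_mul, hp', one_pow]
  apply hx
  linear_combination (p : ZMod q.natAbs) ^ k * h₀ - reduceModOmega q p x * hpk

theorem eq_zero_of_norm_add_omega_pow_mul_eq (hq : 2 ≤ q) (hp : p = -1 ∨ p = 1) {w : ℕ}
    (hw : 2 ≤ w) {u μ : QuadraticAlgebra ℤ (-q) p} (hu : reduceModOmega q p u ≠ 0)
    (hmin : ∀ y, u.norm ≤ (u + ω ^ w * y).norm) (hμ : (u + ω ^ w * μ).norm = u.norm) :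
    μ = 0 := by
  have hp2 : p ^ 2 = 1 := by rcases hp with rfl | rfl <;> norm_num
  have hω : 0 < (ω ^ w : QuadraticAlgebra ℤ (-q) p).norm := by
    rw [map_pow, norm_omega]; positivity
  have hne (n : ℤ) (k : ℕ) (hn : n ≠ 0) (hk : k ≠ 0) :
      ω ^ w * μ ≠ (n : QuadraticAlgebra ℤ (-q) p) * ω ^ k :=
    fun h ↦ norm_add_intCast_mul_omega_pow_ne hp2 hu hn hk (by rwa [h] at hμ)
  obtain ⟨v, rfl⟩ : ∃ v, w = v + 1 := ⟨w - 1, by omega⟩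
  rcases eq_of_norm_le_norm_add_norm_sub hq hp
      (norm_le_norm_add_norm_sub_of_forall_norm_le hω hmin hμ) with
    rfl | rfl | rfl | rfl | rfl | rfl | rfl
  · rfl
  · exact absurd (by push_cast; ring) (hne 1 (v + 1) one_ne_zero (by omega))
  · exact absurd (by push_cast; ring) (hne (-1) (v + 1) (by norm_num) (by omega))
  · exact absurd (by push_cast; ring) (hne 1 (v + 2) one_ne_zero (by omega))
  · exact absurd (by push_cast; ring) (hne (-1) (v + 2) (by norm_num) (by omega))
  · exact absurd (by rw [pow_succ, mul_assoc, omega_mul_star_omega]; ring)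
      (hne q v (by omega) (by omega))
  · exact absurd (by rw [pow_succ, mul_neg, mul_assoc, omega_mul_star_omega]; push_cast; ring)
      (hne (-q) v (by omega) (by omega))

theorem eq_of_forall_norm_add_omega_pow_mul_le (hq : 2 ≤ q) (hp : p = -1 ∨ p = 1) {w : ℕ}
    (hw : 2 ≤ w) {z : QuadraticAlgebra ℤ (-q) p} (hz : reduceModOmega q p z ≠ 0)
    {y₁ y₂ : QuadraticAlgebra ℤ (-q) p}
    (h₁ : ∀ y, (z + ω ^ w * y₁).norm ≤ (z + ω ^ w * y).norm)
    (h₂ : ∀ y, (z + ω ^ w * y₂).norm ≤ (z + ω ^ w * y).norm) : y₁ = y₂ := by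
  have hu : reduceModOmega q p (z + ω ^ w * y₁) ≠ 0 := by
    simpa [reduceModOmega_omega, show w ≠ 0 by omega] using hz
  have hmin (y) : (z + ω ^ w * y₁).norm ≤ (z + ω ^ w * y₁ + ω ^ w * y).norm := by
    simpa only [mul_add, add_assoc] using h₁ (y₁ + y)
  have hμ : (z + ω ^ w * y₁ + ω ^ w * (y₂ - y₁)).norm = (z + ω ^ w * y₁).norm := by
    rw [add_assoc, ← mul_add, add_sub_cancel]
    exact le_antisymm (h₂ y₁) (h₁ y₂)
  exact (sub_eq_zero.1 (eq_zero_of_norm_add_omega_pow_mul_eq hq hp hw hu hmin hμ)).symm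

end MinimalRepresentatives

section Embedding

variable {q p : ℤ}

theorem tauC_mul_self (hq : 0 < q) (hp : p ^ 2 = 1) :
    tauC q p * tauC q p = (-q) • (1 : ℂ) + p • tauC q p := by
  set s : ℂ := ((Real.sqrt ((q : ℝ) - 1 / 4) : ℝ) : ℂ)
  have hs : s ^ 2 = (q : ℂ) - 1 / 4 := by
    have : (1 : ℝ) ≤ q := by exact_mod_cast hq
    rw [← Complex.ofReal_pow, Real.sq_sqrt (by linarith)]; push_cast; ring
  have hp' : (p : ℂ) ^ 2 = 1 := by exact_mod_cast hp
  simp only [tauC, zsmul_eq_mul]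
  push_cast
  linear_combination s ^ 2 * Complex.I_sq - hs - (1 / 4 : ℂ) * hp'

theorem zero_le_norm (hq : 0 < q) (hp : p ^ 2 = 1) (x : QuadraticAlgebra ℤ (-q) p) :
    0 ≤ x.norm := by
  rw [QuadraticAlgebra.norm_def]
  nlinarith [sq_nonneg (2 * x.re + p * x.im), sq_nonneg x.im]

def toComplex (hq : 0 < q) (hp : p ^ 2 = 1) : QuadraticAlgebra ℤ (-q) p →ₐ[ℤ] ℂ :=
  lift ⟨tauC q p, tauC_mul_self hq hp⟩

variable (hq : 0 < q) (hp : p ^ 2 = 1)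

theorem toComplex_apply (x : QuadraticAlgebra ℤ (-q) p) :
    toComplex hq hp x = x.re + x.im * tauC q p := by
  simp [toComplex]

theorem toComplex_omega : toComplex hq hp ω = tauC q p := by
  simp [toComplex_apply]

theorem range_toComplex : Set.range (toComplex hq hp) = Ztau q p := by
  ext z
  constructor
  · rintro ⟨x, rfl⟩; exact ⟨x.re, x.im, toComplex_apply hq hp x⟩
  · rintro ⟨a, b, rfl⟩; exact ⟨⟨a, b⟩, toComplex_apply hq hp _⟩

theorem normSq_toComplex (x : QuadraticAlgebra ℤ (-q) p) :
    Complex.normSq (toComplex hq hp x) = x.norm := by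
  have hs : Real.sqrt ((q : ℝ) - 4⁻¹) ^ 2 = q - 4⁻¹ := by
    have : (1 : ℝ) ≤ q := by exact_mod_cast hq
    exact Real.sq_sqrt (by linarith)
  have hp' : (p : ℝ) ^ 2 = 1 := by exact_mod_cast hp
  simp only [toComplex_apply, tauC, one_div, normSq_apply, add_re, intCast_re, mul_re,
    div_ofNat_re, I_re, ofReal_re, zero_mul, I_im, ofReal_im, mul_zero, sub_self, add_zero,
    intCast_im, add_im, div_ofNat_im, zero_div, mul_im, one_mul, zero_add, sub_zero,
    QuadraticAlgebra.norm_def, neg_mul, sub_neg_eq_add, Int.cast_add, Int.cast_mul]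
  linear_combination (x.im : ℝ) ^ 2 * hs + (x.im : ℝ) ^ 2 / 4 * hp'

theorem norm_toComplex_le_norm_toComplex_iff {x y : QuadraticAlgebra ℤ (-q) p} :
    ‖toComplex hq hp x‖ ≤ ‖toComplex hq hp y‖ ↔ x.norm ≤ y.norm := by
  rw [← pow_le_pow_iff_left₀ (norm_nonneg _) (norm_nonneg _) two_ne_zero,
    ← Complex.normSq_eq_norm_sq, ← Complex.normSq_eq_norm_sq, normSq_toComplex, normSq_toComplex]
  exact_mod_cast Iff.rfl

theorem sub_eq_tauC_pow_mul_iff {w : ℕ} {u : ℂ} {z : QuadraticAlgebra ℤ (-q) p} :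
    (∃ y ∈ Ztau q p, u - toComplex hq hp z = tauC q p ^ w * y) ↔
      ∃ y, u = toComplex hq hp (z + ω ^ w * y) := by
  simp only [← range_toComplex hq hp, Set.exists_range_iff, map_add, map_mul, map_pow,
    toComplex_omega, sub_eq_iff_eq_add']

theorem tauPowDvd_one_toComplex {x : QuadraticAlgebra ℤ (-q) p} (hx : ω ∣ x) :
    tauPowDvd q p 1 (toComplex hq hp x) := by
  obtain ⟨y, rfl⟩ := hx
  exact ⟨toComplex hq hp y, range_toComplex hq hp ▸ Set.mem_range_self y,
    by rw [map_mul, toComplex_omega, pow_one]⟩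

end Embedding

/-- each residue class modulo τ^w not divisible by τ contains a
unique element of minimal absolute value. -/
theorem stmt13 (q p : ℤ) (hq : 2 ≤ q) (hp : p = -1 ∨ p = 1) (w : ℕ) (hw : 2 ≤ w)
    (z : ℂ) (hz : z ∈ Ztau q p) (hnd : ¬ tauPowDvd q p 1 z) :
    ∃! u : ℂ, u ∈ Ztau q p ∧ (∃ y ∈ Ztau q p, u - z = (tauC q p) ^ w * y) ∧
      ∀ u' ∈ Ztau q p, (∃ y ∈ Ztau q p, u' - z = (tauC q p) ^ w * y) →
        ‖u‖ ≤ ‖u'‖ := by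
  have hq₀ : 0 < q := by omega
  have hp₂ : p ^ 2 = 1 := by rcases hp with rfl | rfl <;> norm_num
  obtain ⟨z, rfl⟩ := (range_toComplex hq₀ hp₂).symm ▸ hz
  have hz' : reduceModOmega q p z ≠ 0 := fun h ↦
    hnd (tauPowDvd_one_toComplex hq₀ hp₂ (omega_dvd_of_reduceModOmega_eq_zero h))
  have hmem (x) : toComplex hq₀ hp₂ x ∈ Ztau q p := range_toComplex hq₀ hp₂ ▸ Set.mem_range_self x
  obtain ⟨y₀, hy₀⟩ := exists_forall_norm_add_mul_le (zero_le_norm hq₀ hp₂) z (ω ^ w)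
  refine ⟨toComplex hq₀ hp₂ (z + ω ^ w * y₀),
    ⟨hmem _, (sub_eq_tauC_pow_mul_iff hq₀ hp₂).2 ⟨y₀, rfl⟩, ?_⟩, ?_⟩
  · rintro u' - hu'
    obtain ⟨y, rfl⟩ := (sub_eq_tauC_pow_mul_iff hq₀ hp₂).1 hu'
    exact (norm_toComplex_le_norm_toComplex_iff hq₀ hp₂).2 (hy₀ y)
  · rintro u' ⟨-, hu', hmin⟩
    obtain ⟨y, rfl⟩ := (sub_eq_tauC_pow_mul_iff hq₀ hp₂).1 hu'
    have hy (y') : (z + ω ^ w * y).norm ≤ (z + ω ^ w * y').norm :=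
      (norm_toComplex_le_norm_toComplex_iff hq₀ hp₂).1
        (hmin _ (hmem _) ((sub_eq_tauC_pow_mul_iff hq₀ hp₂).2 ⟨y', rfl⟩))
    rw [eq_of_forall_norm_add_omega_pow_mul_le hq hp hw hz' hy hy₀]
end
end

section
/- Let q ≥ 3, p = 1, and a = ⌈q/2⌉. Set E = 1, A = (1 − a)·τ + (a − q), F = q − a, B = 1 − τ, and G = (a − 1)·τ + 1. Then A·τ + B = E·τ⁴ + F·τ² + G, and each of A, B, E, F, G is a nonzero digit modulo τ². Consequently the element A·τ + B has a digit expansion of weight 2, while the right-hand side is a 2-NAF expansion of it of weight 3, so the 2-NAF is not a minimal digit expansion. -/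
noncomputable section

open Complex

/-!
For `p = 1` the base satisfies `τ² = τ - q`, so `N (x + y τ) = x² + x y + q y²`, `τ` divides
`x + y τ` only if `q ∣ x`, and the equality of the two expansions is a polynomial identity
modulo `τ² - τ + q` (valid for every integer `a`). An element `η` has minimal norm in
`η + τ² ℤ[τ]` as soon as it is no longer than `η - τ² y` for the six neighbours
`y = ±1, ±τ, ±(τ - 1)` of `0`, since these cut out the Voronoi cell of `ℤ[τ]`; for the five digits
this leaves polynomial inequalities in `q` and `a`, where `q ≤ 2 a ≤ q + 1`.
-/

section TauArithmetic

variable {q : ℤ}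

lemma tauC_one_sq (hq : 0 < q) : tauC q 1 ^ 2 = tauC q 1 - q := by
  have hr : ((Real.sqrt ((q : ℝ) - 1/4) : ℝ) : ℂ) ^ 2 = (q : ℂ) - 1/4 := by
    have : (1 : ℝ) ≤ q := by exact_mod_cast hq
    rw [← Complex.ofReal_pow, Real.sq_sqrt (by linarith)]
    push_cast; ring
  simp only [tauC, Int.cast_one]
  linear_combination ((Real.sqrt ((q : ℝ) - 1/4) : ℝ) : ℂ) ^ 2 * Complex.I_sq - hr

lemma re_add_mul_tauC (x y : ℤ) : ((x : ℂ) + y * tauC q 1).re = x + y / 2 := by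
  simp [tauC, div_eq_mul_inv]

lemma im_add_mul_tauC (x y : ℤ) :
    ((x : ℂ) + y * tauC q 1).im = y * Real.sqrt ((q : ℝ) - 1/4) := by
  simp [tauC]

lemma normSq_add_mul_tauC (hq : 0 < q) (x y : ℤ) :
    Complex.normSq (x + y * tauC q 1) = ((x ^ 2 + x * y + q * y ^ 2 : ℤ) : ℝ) := by
  have hr : Real.sqrt ((q : ℝ) - 1/4) ^ 2 = q - 1/4 := by
    have : (1 : ℝ) ≤ q := by exact_mod_cast hq
    exact Real.sq_sqrt (by linarith)
  rw [Complex.normSq_apply, re_add_mul_tauC, im_add_mul_tauC]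
  push_cast
  linear_combination (y : ℝ) ^ 2 * hr

lemma add_mul_tauC_injective (hq : 0 < q) {x y x' y' : ℤ}
    (h : (x : ℂ) + y * tauC q 1 = x' + y' * tauC q 1) : x = x' ∧ y = y' := by
  have hr : 0 < Real.sqrt ((q : ℝ) - 1/4) := by
    have : (1 : ℝ) ≤ q := by exact_mod_cast hq
    exact Real.sqrt_pos.2 (by linarith)
  have him := congrArg Complex.im h
  have hre := congrArg Complex.re h
  rw [im_add_mul_tauC, im_add_mul_tauC] at him
  rw [re_add_mul_tauC, re_add_mul_tauC] at hre
  have hy : y = y' := by exact_mod_cast mul_right_cancel₀ hr.ne' him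
  subst hy
  exact ⟨by exact_mod_cast add_right_cancel hre, rfl⟩

lemma dvd_of_tauPowDvd_one (hq : 0 < q) {x y : ℤ} (h : tauPowDvd q 1 1 (x + y * tauC q 1)) :
    q ∣ x := by
  obtain ⟨_, ⟨c, d, rfl⟩, h⟩ := h
  have h' : (x : ℂ) + y * tauC q 1 = ((-d * q : ℤ) : ℂ) + ((c + d : ℤ) : ℂ) * tauC q 1 := by
    rw [h]; push_cast
    linear_combination (d : ℂ) * tauC_one_sq hq
  exact ⟨-d, by rw [(add_mul_tauC_injective hq h').1]; ring⟩

end TauArithmetic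

lemma Int.mul_sub_one_nonneg (k : ℤ) : 0 ≤ k * (k - 1) := by
  rcases le_or_gt k 0 with hk | hk
  · exact mul_nonneg_of_nonpos_of_nonpos hk (by omega)
  · exact mul_nonneg hk.le (by omega)

lemma linear_le_of_abs_le {q c s t : ℤ} (hq : 1 ≤ q) (hs : |s| ≤ c) (ht : |t| ≤ c * q)
    (hst : |s - t| ≤ c * q) (m n : ℤ) : s * m + t * n ≤ c * (m ^ 2 + m * n + q * n ^ 2) := by
  wlog hm : 0 ≤ m generalizing s t m n
  · have := this (s := -s) (t := -t) (by rwa [abs_neg]) (by rwa [abs_neg])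
      (by rwa [← abs_neg, neg_sub_neg, neg_sub]) (-m) (-n) (by omega)
    linarith
  obtain ⟨-, hs⟩ := abs_le.mp hs
  obtain ⟨ht, ht'⟩ := abs_le.mp ht
  obtain ⟨-, hst⟩ := abs_le.mp hst
  have hn₁ := Int.mul_sub_one_nonneg (n + 1)
  rcases le_or_gt 0 n with hn | hn
  · have : 0 ≤ m * (m - 1) + m * n + q * (n * (n - 1)) := by
      nlinarith [Int.mul_sub_one_nonneg m, mul_nonneg hm hn,
        mul_nonneg (by omega : (0 : ℤ) ≤ q) (Int.mul_sub_one_nonneg n)]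
    nlinarith [mul_le_mul_of_nonneg_right hs hm, mul_le_mul_of_nonneg_right ht' hn]
  rcases le_or_gt 0 (m + n) with hmn | hmn
  · have : 0 ≤ (m + n) * (m - 1) + q * ((n + 1) * (n + 1 - 1)) :=
      add_nonneg (mul_nonneg hmn (by omega)) (mul_nonneg (by omega) hn₁)
    nlinarith [mul_le_mul_of_nonneg_right hs hmn,
      mul_le_mul_of_nonneg_right hst (by omega : 0 ≤ -n)]
  · -- `m (m + n) + n (n + 1) = (m + n) (m + n + 1) - m (n + 1)` with both terms `≥ 0`
    have : 0 ≤ m * (m + n) + q * ((n + 1) * (n + 1 - 1)) := by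
      nlinarith [Int.mul_sub_one_nonneg (m + n + 1), mul_nonneg hm (by omega : 0 ≤ -n - 1),
        mul_nonneg (by omega : 0 ≤ q - 1) hn₁]
    nlinarith [mul_le_mul_of_nonneg_right hst hm, mul_le_mul_of_nonpos_right ht hmn.le]

/-- `s` and `t` are `2 Re (η τ̄²)` and `2 Re (η τ̄³)` for `η = u + v τ`, so that
`N (η - τ² (m + n τ)) = N η - (s m + t n) + q² N (m + n τ)`; the three bounds say that `η` is
no longer than `η - τ² y` for the six neighbours `y = ±1, ±τ, ±(τ - 1)` of `0`. -/
lemma isNonzeroDigit_two_of_abs_le {q u v : ℤ} (hq : 0 < q) (hu : ¬ q ∣ u)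
    (hs : |u * (1 - 2 * q) + v * q| ≤ q ^ 2)
    (ht : |u * (1 - 3 * q) + v * (q - 2 * q ^ 2)| ≤ q ^ 3)
    (hst : |(u * (1 - 2 * q) + v * q) - (u * (1 - 3 * q) + v * (q - 2 * q ^ 2))| ≤ q ^ 3) :
    IsNonzeroDigit q 1 2 (u + v * tauC q 1) := by
  refine ⟨⟨u, v, rfl⟩, fun h => hu (dvd_of_tauPowDvd_one hq h), ?_⟩
  rintro _ ⟨m, n, rfl⟩
  have hsub : (u : ℂ) + v * tauC q 1 - tauC q 1 ^ 2 * (m + n * tauC q 1)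
      = ((u + q * (m + n) : ℤ) : ℂ) + ((v - m - n + q * n : ℤ) : ℂ) * tauC q 1 := by
    push_cast
    linear_combination (-(m : ℂ) - n - n * tauC q 1) * tauC_one_sq hq
  have hlin := linear_le_of_abs_le (t := u * (1 - 3 * q) + v * (q - 2 * q ^ 2)) hq hs
    (by rwa [← pow_succ]) (by rwa [← pow_succ]) m n
  rw [hsub, Complex.norm_def, Complex.norm_def, normSq_add_mul_tauC hq,
    normSq_add_mul_tauC hq]
  refine Real.sqrt_le_sqrt (Int.cast_le.mpr ?_)
  linear_combination hlin

lemma isNonzeroDigit_two_intCast {q c : ℤ} (hc : c ≠ 0) (hcq : 2 * |c| ≤ q) :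
    IsNonzeroDigit q 1 2 (c : ℂ) := by
  have hc' : 0 < |c| := abs_pos.mpr hc
  have hq : 0 < q := by omega
  have hndvd : ¬ q ∣ c := fun h => by
    have := Int.le_of_dvd hc' ((dvd_abs q c).mpr h)
    omega
  have := isNonzeroDigit_two_of_abs_le (v := 0) hq hndvd
  simp only [add_zero, Int.cast_zero, zero_mul] at this
  rw [abs_mul, abs_mul, abs_of_neg (by omega : 1 - 2 * q < 0),
    abs_of_neg (by omega : 1 - 3 * q < 0), ← mul_sub, abs_mul,
    show 1 - 2 * q - (1 - 3 * q) = q by ring, abs_of_pos hq] at this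
  have h₁ := mul_le_mul_of_nonneg_right hcq (by omega : (0 : ℤ) ≤ 2 * q - 1)
  have h₂ := mul_le_mul_of_nonneg_right hcq (by omega : (0 : ℤ) ≤ 3 * q - 1)
  have h₃ := mul_le_mul_of_nonneg_right hcq hq.le
  apply this <;> nlinarith [mul_pos hq hq]

lemma not_dvd_one_of_two_le {q : ℤ} (hq : 2 ≤ q) : ¬ q ∣ 1 := fun h => by
  have := Int.le_of_dvd (by norm_num) h
  omega

lemma isNonzeroDigit_two_one_sub_tauC {q : ℤ} (hq : 3 ≤ q) :
    IsNonzeroDigit q 1 2 (1 - tauC q 1) := by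
  have := isNonzeroDigit_two_of_abs_le (q := q) (u := 1) (v := -1) (by omega)
    (not_dvd_one_of_two_le (by omega))
  push_cast at this
  rw [sub_eq_add_neg, ← neg_one_mul]
  apply this <;> rw [abs_le] <;> constructor <;> nlinarith

lemma isNonzeroDigit_two_mul_tauC_add_one {q a : ℤ} (hq : 3 ≤ q) (ha₁ : q ≤ 2 * a)
    (ha₂ : 2 * a ≤ q + 1) :
    IsNonzeroDigit q 1 2 (((a - 1 : ℤ) : ℂ) * tauC q 1 + 1) := by
  have := isNonzeroDigit_two_of_abs_le (q := q) (u := 1) (v := a - 1) (by omega)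
    (not_dvd_one_of_two_le (by omega))
  rw [add_comm]
  push_cast at this ⊢
  rcases (by omega : q = 2 * a ∨ q = 2 * a - 1) with rfl | rfl <;>
  · apply this <;> rw [abs_le] <;> constructor <;> nlinarith

lemma isNonzeroDigit_two_mul_tauC_add_sub {q a : ℤ} (hq : 3 ≤ q) (ha₁ : q ≤ 2 * a)
    (ha₂ : 2 * a ≤ q + 1) :
    IsNonzeroDigit q 1 2 (((1 - a : ℤ) : ℂ) * tauC q 1 + ((a - q : ℤ) : ℂ)) := by
  have hndvd : ¬ q ∣ a - q := fun h => by
    have := Int.le_of_dvd (by omega) (by simpa using dvd_add h (dvd_refl q) : q ∣ a)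
    omega
  have := isNonzeroDigit_two_of_abs_le (v := 1 - a) (by omega) hndvd
  rw [add_comm]
  rcases (by omega : q = 2 * a ∨ q = 2 * a - 1) with rfl | rfl <;>
  · apply this <;> rw [abs_le] <;> constructor <;> nlinarith

lemma le_two_mul_ceil_half (q : ℤ) : q ≤ 2 * ⌈(q : ℚ) / 2⌉ := by
  have := Int.le_ceil ((q : ℚ) / 2)
  exact_mod_cast (by linarith : (q : ℚ) ≤ 2 * ⌈(q : ℚ) / 2⌉)

lemma two_mul_ceil_half_le (q : ℤ) : 2 * ⌈(q : ℚ) / 2⌉ ≤ q + 1 := by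
  have := Int.ceil_lt_add_one ((q : ℚ) / 2)
  have : 2 * ⌈(q : ℚ) / 2⌉ < q + 2 := by
    exact_mod_cast (by linarith : 2 * (⌈(q : ℚ) / 2⌉ : ℚ) < q + 2)
  omega

lemma two_digit_eq_three_digit {q : ℤ} (hq : 0 < q) (a : ℤ) :
    (((1 - a : ℤ) : ℂ) * tauC q 1 + ((a - q : ℤ) : ℂ)) * tauC q 1 + (1 - tauC q 1) =
      1 * tauC q 1 ^ 4 + ((q - a : ℤ) : ℂ) * tauC q 1 ^ 2
        + (((a - 1 : ℤ) : ℂ) * tauC q 1 + 1) := by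
  push_cast
  linear_combination (-tauC q 1 ^ 2 - tauC q 1) * tauC_one_sq hq

section Expansions

variable {q p : ℤ} {w : ℕ}

lemma IsNonzeroDigit.ne_zero {η : ℂ} (h : IsNonzeroDigit q p w η) : η ≠ 0 := by
  rintro rfl
  exact h.2.1 ⟨0, ⟨0, 0, by simp⟩, by simp⟩

lemma isExpansion_finsupp {z : ℂ} (σ : ℕ →₀ ℂ) (hz : z = σ.sum fun ℓ d => d * tauC q p ^ ℓ)
    (hσ : ∀ ℓ ∈ σ.support, IsNonzeroDigit q p w (σ ℓ)) : IsExpansion q p w z σ := by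
  refine ⟨σ.hasFiniteSupport, fun ℓ => ?_, hz.trans ?_⟩
  · by_cases h : σ ℓ = 0
    · exact Or.inl h
    · exact Or.inr (hσ ℓ (Finsupp.mem_support_iff.mpr h))
  · refine (finsum_eq_finsetSum_of_support_subset _ fun ℓ hℓ => ?_).symm
    simp only [Function.mem_support, Finset.mem_coe, Finsupp.mem_support_iff] at hℓ ⊢
    exact left_ne_zero_of_mul hℓ

lemma expWeight_finsupp (σ : ℕ →₀ ℂ) : expWeight σ = σ.support.card := by
  rw [expWeight, Finsupp.fun_support_eq, Set.ncard_coe_finset]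

lemma isNAF_of_support {σ : ℕ →₀ ℂ}
    (h : ∀ i ∈ σ.support, ∀ j ∈ σ.support, i < j → i + w ≤ j) : IsNAF w σ := by
  intro ℓ i j hi hj hσi hσj
  have hi' := Finsupp.mem_support_iff.mpr hσi
  have hj' := Finsupp.mem_support_iff.mpr hσj
  rcases lt_trichotomy i j with hij | hij | hij
  · have := h _ hi' _ hj' (by omega); omega
  · exact hij
  · have := h _ hj' _ hi' (by omega); omega

lemma exists_isExpansion_expWeight_two {A B : ℂ} (hA : IsNonzeroDigit q p w A)
    (hB : IsNonzeroDigit q p w B) :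
    ∃ σ : ℕ → ℂ, IsExpansion q p w (A * tauC q p + B) σ ∧ expWeight σ = 2 := by
  let σ : ℕ →₀ ℂ := Finsupp.single 1 A + Finsupp.single 0 B
  have hσ : σ.support = {1, 0} :=
    Finsupp.support_single_add_single (by norm_num) hA.ne_zero hB.ne_zero
  refine ⟨σ, isExpansion_finsupp σ (by simp [σ, Finsupp.sum_add_index', add_mul]) ?_, ?_⟩
  · simp [hσ, σ, hA, hB]
  · rw [expWeight_finsupp, hσ]; rfl

lemma exists_isExpansion_isNAF_two_expWeight_three {E F G : ℂ} (hE : IsNonzeroDigit q p w E)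
    (hF : IsNonzeroDigit q p w F) (hG : IsNonzeroDigit q p w G) :
    ∃ σ : ℕ → ℂ, IsExpansion q p w (E * tauC q p ^ 4 + F * tauC q p ^ 2 + G) σ ∧
      IsNAF 2 σ ∧ expWeight σ = 3 := by
  let σ : ℕ →₀ ℂ := Finsupp.single 4 E + Finsupp.single 2 F + Finsupp.single 0 G
  have hEF := Finsupp.support_single_add_single (by norm_num : 4 ≠ 2) hE.ne_zero hF.ne_zero
  have hσ : σ.support = {4, 2, 0} := by
    rw [Finsupp.support_add_eq, hEF, Finsupp.support_single _ hG.ne_zero]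
    · rfl
    · rw [hEF, Finsupp.support_single _ hG.ne_zero]
      decide
  refine ⟨σ, isExpansion_finsupp σ (by simp [σ, Finsupp.sum_add_index', add_mul]) ?_,
    isNAF_of_support (by rw [hσ]; decide), ?_⟩
  · simp [hσ, σ, hE, hF, hG]
  · rw [expWeight_finsupp, hσ]; rfl

end Expansions

/-- explicit counterexample to minimality of the 2-NAF for q ≥ 3,
p = 1. -/
theorem stmt14 (q p : ℤ) (hq : 3 ≤ q) (hp : p = 1) :
    let a : ℤ := ⌈(q : ℚ) / 2⌉
    let τ : ℂ := tauC q p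
    let E : ℂ := 1
    let A : ℂ := ((1 - a : ℤ) : ℂ) * τ + ((a - q : ℤ) : ℂ)
    let F : ℂ := ((q - a : ℤ) : ℂ)
    let B : ℂ := 1 - τ
    let G : ℂ := ((a - 1 : ℤ) : ℂ) * τ + 1
    A * τ + B = E * τ ^ 4 + F * τ ^ 2 + G ∧
    IsNonzeroDigit q p 2 A ∧ IsNonzeroDigit q p 2 B ∧ IsNonzeroDigit q p 2 E ∧
    IsNonzeroDigit q p 2 F ∧ IsNonzeroDigit q p 2 G ∧
    (∃ σ' : ℕ → ℂ, IsExpansion q p 2 (A * τ + B) σ' ∧ expWeight σ' = 2) ∧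
    (∃ σ : ℕ → ℂ, IsExpansion q p 2 (A * τ + B) σ ∧ IsNAF 2 σ ∧ expWeight σ = 3) := by
  subst hp
  intro a τ E A F B G
  have ha₁ : q ≤ 2 * a := le_two_mul_ceil_half q
  have ha₂ : 2 * a ≤ q + 1 := two_mul_ceil_half_le q
  have hA : IsNonzeroDigit q 1 2 A := isNonzeroDigit_two_mul_tauC_add_sub hq ha₁ ha₂
  have hB : IsNonzeroDigit q 1 2 B := isNonzeroDigit_two_one_sub_tauC hq
  have hE : IsNonzeroDigit q 1 2 E := by
    simpa using isNonzeroDigit_two_intCast (q := q) one_ne_zero (by simp; omega)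
  have hF : IsNonzeroDigit q 1 2 F :=
    isNonzeroDigit_two_intCast (by omega) (by rw [abs_of_pos (by omega)]; omega)
  have hG : IsNonzeroDigit q 1 2 G := isNonzeroDigit_two_mul_tauC_add_one hq ha₁ ha₂
  have heq : A * τ + B = E * τ ^ 4 + F * τ ^ 2 + G := two_digit_eq_three_digit (by omega) a
  refine ⟨heq, hA, hB, hE, hF, hG, exists_isExpansion_expWeight_two hA hB, ?_⟩
  rw [heq]
  exact exists_isExpansion_isNAF_two_expWeight_three hE hF hG
end
end

section
/- Let P ⊆ ℂ be the convex hull of the four points 1, τ − p, −1, −τ + p, and let s = √((q − 1/4)/(q + 2)). Then the closed disc of radius s centered at 0 is contained in P, and s is the largest such radius: every real r ≥ 0 such that the closed disc of radius r centered at 0 is contained in P satisfies r ≤ s. -/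
noncomputable section

open Complex

/-!
A centrally symmetric parallelogram `conv {±a, ±b}` in `ℂ` is the intersection of the two strips
`|ω z (b - a)| ≤ |ω a b|` and `|ω z (b + a)| ≤ |ω a b|`, where `ω z w = (conj z * w).im` is the
area form: writing `z = α a + β b` by Cramer's rule, these say `|α + β| ≤ 1` and `|α - β| ≤ 1`,
i.e. `|α| + |β| ≤ 1`. A strip `|ω z w| ≤ c` contains the disc of radius `r` exactly when
`r ‖w‖ ≤ c`, so the inradius is `|ω a b| / max ‖b ∓ a‖`. For `a = 1`, `b = τ - p` this is
`√(q - 1/4) / √(q + 2) = s`, since `‖b ∓ 1‖² = q + 1 ± p`.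
-/

open Metric

section SymmetricHull

variable {E : Type*} [AddCommGroup E] [Module ℝ E]

theorem smul_add_smul_mem_convexHull_of_abs_add_abs_le (a b : E) {α β : ℝ}
    (h : |α| + |β| ≤ 1) : α • a + β • b ∈ convexHull ℝ {a, b, -a, -b} := by
  -- the mass `1 - |β|` is split between `±a` and the mass `|β|` between `±b`
  let w : Fin 4 → ℝ := ![(1 - |β| + α) / 2, (1 - |β| - α) / 2, (|β| + β) / 2, (|β| - β) / 2]
  let v : Fin 4 → E := ![a, -a, b, -b]
  have hw : ∀ i ∈ Finset.univ, 0 ≤ w i := by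
    have hα := abs_le.1 (show |α| ≤ 1 - |β| by linarith)
    have hβ := abs_le.1 (le_refl |β|)
    intro i _
    fin_cases i <;>
      simp only [w, Fin.zero_eta, Fin.mk_one, Fin.reduceFinMk, Fin.isValue, Matrix.cons_val_zero,
        Matrix.cons_val_one, Matrix.cons_val] <;>
      linarith
  have hsum : ∑ i, w i = 1 := by
    simp only [w, Fin.sum_univ_four, Fin.isValue, Matrix.cons_val]
    ring
  have hv : ∀ i ∈ Finset.univ, v i ∈ convexHull ℝ {a, b, -a, -b} := by
    intro i _
    apply subset_convexHull
    fin_cases i <;> simp [v]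
  convert (convex_convexHull ℝ _).sum_mem hw hsum hv using 1
  simp only [w, v, Fin.sum_univ_four, Fin.isValue, Matrix.cons_val]
  module

theorem abs_le_of_mem_convexHull (f : E →ₗ[ℝ] ℝ) {a b z : E} {c : ℝ} (ha : |f a| ≤ c)
    (hb : |f b| ≤ c) (hz : z ∈ convexHull ℝ {a, b, -a, -b}) : |f z| ≤ c := by
  have hsub : {a, b, -a, -b} ⊆ f ⁻¹' Set.Icc (-c) c := by
    simp only [Set.insert_subset_iff, Set.singleton_subset_iff, Set.mem_preimage, Set.mem_Icc,
      map_neg, neg_le_neg_iff, neg_le]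
    rw [abs_le] at ha hb
    exact ⟨ha, hb, ⟨ha.2, ha.1⟩, ⟨hb.2, hb.1⟩⟩
  exact abs_le.2 (convexHull_min hsub ((convex_Icc _ _).linear_preimage f) hz)

end SymmetricHull

section ComplexParallelogram

attribute [local instance] Complex.finrank_real_complex_fact

local notation "ω" => Complex.orientation.areaForm

theorem areaForm_smul_eq_add (a b z : ℂ) : ω a b • z = ω z b • a + ω a z • b := by
  apply Complex.ext <;> simp <;> ring

theorem mem_convexHull_of_abs_areaForm_le {a b z : ℂ} (hab : ω a b ≠ 0)
    (hsub : |ω z (b - a)| ≤ |ω a b|) (hadd : |ω z (b + a)| ≤ |ω a b|) :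
    z ∈ convexHull ℝ {a, b, -a, -b} := by
  have hz : z = (ω z b / ω a b) • a + (ω a z / ω a b) • b := by
    rw [div_eq_inv_mul, div_eq_inv_mul, mul_smul, mul_smul, ← smul_add, ← areaForm_smul_eq_add,
      inv_smul_smul₀ hab]
  have hD : 0 < |ω a b| := abs_pos.2 hab
  have hswap : ω a z = -ω z a := Complex.orientation.areaForm_swap a z
  have hplus : |ω z b / ω a b + ω a z / ω a b| ≤ 1 := by
    rwa [← add_div, hswap, ← sub_eq_add_neg, ← map_sub, abs_div, div_le_one hD]
  have hminus : |ω z b / ω a b - ω a z / ω a b| ≤ 1 := by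
    rwa [← sub_div, hswap, sub_neg_eq_add, ← map_add, abs_div, div_le_one hD]
  rw [hz]
  refine smul_add_smul_mem_convexHull_of_abs_add_abs_le a b ?_
  rw [abs_le] at hplus hminus
  cases abs_cases (ω z b / ω a b) <;> cases abs_cases (ω a z / ω a b) <;> linarith

theorem abs_areaForm_le_of_mem_convexHull {a b z : ℂ} (hz : z ∈ convexHull ℝ {a, b, -a, -b}) :
    |ω z (b - a)| ≤ |ω a b| ∧ |ω z (b + a)| ≤ |ω a b| := by
  have hswap : ω b a = -ω a b := Complex.orientation.areaForm_swap b a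
  constructor
  · refine abs_le_of_mem_convexHull (LinearMap.flip ω (b - a)) ?_ ?_ hz <;>
      simp [hswap, -Complex.areaForm]
  · refine abs_le_of_mem_convexHull (LinearMap.flip ω (b + a)) ?_ ?_ hz <;>
      simp [hswap, -Complex.areaForm]

theorem exists_mem_closedBall_abs_areaForm_eq (w : ℂ) {r : ℝ} (hr : 0 ≤ r) :
    ∃ z ∈ closedBall (0 : ℂ) r, |ω z w| = r * ‖w‖ := by
  rcases eq_or_ne w 0 with rfl | hw
  · exact ⟨0, by simpa using hr, by simp⟩
  refine ⟨(r / ‖w‖) • Complex.orientation.rightAngleRotation w, ?_, ?_⟩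
  · simp [abs_of_nonneg hr, hw]
  · rw [map_smul, LinearMap.smul_apply, Complex.orientation.areaForm_rightAngleRotation_left,
      real_inner_self_eq_norm_sq, smul_eq_mul, abs_mul, abs_neg, abs_div, abs_of_nonneg hr,
      abs_norm, abs_of_nonneg (by positivity)]
    field_simp

theorem closedBall_zero_subset_convexHull_iff {a b : ℂ} (hab : ω a b ≠ 0) {r : ℝ} (hr : 0 ≤ r) :
    closedBall 0 r ⊆ convexHull ℝ {a, b, -a, -b} ↔
      r * ‖b - a‖ ≤ |ω a b| ∧ r * ‖b + a‖ ≤ |ω a b| := by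
  constructor
  · intro hball
    constructor
    · obtain ⟨z, hz, hzw⟩ := exists_mem_closedBall_abs_areaForm_eq (b - a) hr
      exact hzw ▸ (abs_areaForm_le_of_mem_convexHull (hball hz)).1
    · obtain ⟨z, hz, hzw⟩ := exists_mem_closedBall_abs_areaForm_eq (b + a) hr
      exact hzw ▸ (abs_areaForm_le_of_mem_convexHull (hball hz)).2
  · rintro ⟨hsub, hadd⟩ z hz
    have hzr : ‖z‖ ≤ r := by simpa using hz
    refine mem_convexHull_of_abs_areaForm_le hab ?_ ?_
    · exact (Complex.orientation.abs_areaForm_le _ _).trans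
        ((mul_le_mul_of_nonneg_right hzr (norm_nonneg _)).trans hsub)
    · exact (Complex.orientation.abs_areaForm_le _ _).trans
        ((mul_le_mul_of_nonneg_right hzr (norm_nonneg _)).trans hadd)

theorem closedBall_subset_convexHull_tauC_iff {q p : ℤ} (hq : 1 ≤ q) (hp : p = -1 ∨ p = 1)
    {r : ℝ} (hr : 0 ≤ r) :
    closedBall 0 r ⊆ convexHull ℝ {1, tauC q p - p, -1, -(tauC q p - p)} ↔ r ≤ sHeight q := by
  have hq' : (1 : ℝ) ≤ q := by exact_mod_cast hq
  have hre : (tauC q p - p).re = -p / 2 := by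
    simp only [tauC, sub_re, add_re, div_ofNat_re, intCast_re, mul_re, I_re, ofReal_re, zero_mul,
      I_im, ofReal_im, mul_zero, sub_self, add_zero]
    ring
  have him : (tauC q p - p).im = √(q - 1 / 4) := by simp [tauC]
  have hω : ω 1 (tauC q p - p) = √(q - 1 / 4) := by simp [him]
  have hnorm : ‖tauC q p - p - 1‖ ^ 2 = (1 + p / 2) ^ 2 + (q - 1 / 4) ∧
      ‖tauC q p - p + 1‖ ^ 2 = (1 - p / 2) ^ 2 + (q - 1 / 4) := by
    constructor <;> rw [Complex.sq_norm, Complex.normSq_apply] <;>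
      simp only [sub_re, add_re, hre, one_re, sub_im, add_im, him, one_im, sub_zero, add_zero] <;>
      rw [Real.mul_self_sqrt (by linarith)] <;> ring
  rw [closedBall_zero_subset_convexHull_iff (hω ▸ (Real.sqrt_pos.2 (by linarith)).ne') hr, hω,
    abs_of_nonneg (Real.sqrt_nonneg _), sHeight,
    Real.le_sqrt hr (div_nonneg (by linarith) (by linarith)), le_div_iff₀ (by linarith),
    ← pow_le_pow_iff_left₀ (by positivity) (Real.sqrt_nonneg _) two_ne_zero,
    ← pow_le_pow_iff_left₀ (by positivity) (Real.sqrt_nonneg _) two_ne_zero,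
    Real.sq_sqrt (by linarith), mul_pow, mul_pow, hnorm.1, hnorm.2]
  have hr2 := sq_nonneg r
  rcases hp with rfl | rfl <;> push_cast <;>
    exact ⟨fun h => by linarith [h.1, h.2], fun h => ⟨by nlinarith, by nlinarith⟩⟩

end ComplexParallelogram

/-- the disc of radius s = √((q − 1/4)/(q + 2)) fits exactly into
the parallelogram with vertices 1, τ − p, −1, −τ + p. -/
theorem stmt16 (q p : ℤ) (hq : 2 ≤ q) (hp : p = -1 ∨ p = 1) :
    Metric.closedBall (0 : ℂ) (sHeight q) ⊆
      convexHull ℝ ({1, tauC q p - (p : ℂ), -1, -(tauC q p) + (p : ℂ)} : Set ℂ) ∧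
    ∀ r : ℝ, 0 ≤ r →
      Metric.closedBall (0 : ℂ) r ⊆
        convexHull ℝ ({1, tauC q p - (p : ℂ), -1, -(tauC q p) + (p : ℂ)} : Set ℂ) →
      r ≤ sHeight q := by
  rw [show -(tauC q p) + (p : ℂ) = -(tauC q p - p) by ring]
  have hq1 : 1 ≤ q := by omega
  exact ⟨(closedBall_subset_convexHull_tauC_iff hq1 hp (Real.sqrt_nonneg _)).2 le_rfl,
    fun r hr hball => (closedBall_subset_convexHull_tauC_iff hq1 hp hr).1 hball⟩
end
end

section
/- Let w ≥ 2 be an integer. If w ≥ 5 or q ≥ 5, then there exists a nonzero digit a modulo τ^w such that a + τ^{w−1} is also a nonzero digit modulo τ^w. If either (w ≥ 4 and q ≥ 11) or w ≥ 8, then there exists a nonzero digit b modulo τ^w such that b + (conj τ)·τ^{w−1} is also a nonzero digit modulo τ^w, where conj τ denotes the complex conjugate of τ. -/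
noncomputable section

open Complex

/-!
A lattice point `a` is a digit modulo `τ ^ w` as soon as `x = a / τ ^ w` lies in the Voronoi cell
of `ℤ[τ]`. When `‖x‖ ≤ 1`, the only lattice points that could be closer to `x` than `0` are
`±1, ±τ, ±(τ - p)`, so membership reduces to the three strips `2 |⟪x, y⟫| ≤ ‖y‖ ^ 2`,
`y ∈ {1, τ, τ - p}`.

Given `c` divisible by `τ`, put `a = (e - c) / 2`, where `e ≡ c (mod 2)` has coordinates of size
at most `2` and `1` (so `‖e‖ ^ 2 ≤ q + 6`) and is chosen so that `τ ∤ a`. Then `a` and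
`a + c = (e + c) / 2` are both digits as soon as `c / τ ^ w` lies in each strip with a margin of
`‖e / τ ^ w‖ ≤ √((q + 6) / q ^ w)`. For `c = τ ^ (w - 1)` and `c = conj τ * τ ^ (w - 1)` this
quotient is `1 / τ` and `conj τ / τ` respectively, and the bounds on `w` and `q` provide the margin.
-/

open scoped ComplexConjugate InnerProductSpace

lemma le_norm_sub_of_two_mul_inner_le {E : Type*} [NormedAddCommGroup E] [InnerProductSpace ℝ E]
    {x y : E} (h : 2 * ⟪x, y⟫_ℝ ≤ ‖y‖ ^ 2) : ‖x‖ ≤ ‖x - y‖ := by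
  have := norm_sub_sq_real x y
  nlinarith [norm_nonneg x, norm_nonneg (x - y)]

lemma two_mul_abs_inner_le_of_two_smul_eq {E : Type*} [NormedAddCommGroup E]
    [InnerProductSpace ℝ E] {x e c y : E} {δ : ℝ} (hx : (2 : ℝ) • x = e + c) (he : ‖e‖ ≤ δ)
    (hc : |⟪c, y⟫_ℝ| + δ * ‖y‖ ≤ ‖y‖ ^ 2) : 2 * |⟪x, y⟫_ℝ| ≤ ‖y‖ ^ 2 := by
  have h2 : 2 * ⟪x, y⟫_ℝ = ⟪e, y⟫_ℝ + ⟪c, y⟫_ℝ := by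
    rw [← real_inner_smul_left, hx, inner_add_left]
  calc 2 * |⟪x, y⟫_ℝ| = |⟪e, y⟫_ℝ + ⟪c, y⟫_ℝ| := by rw [← h2, abs_mul, abs_two]
    _ ≤ ‖e‖ * ‖y‖ + |⟪c, y⟫_ℝ| :=
      (abs_add_le _ _).trans (by gcongr; exact abs_real_inner_le_norm e y)
    _ ≤ ‖y‖ ^ 2 := by nlinarith [norm_nonneg y]

namespace TauAdic

variable {q p : ℤ}

lemma tauC_re : (tauC q p).re = p / 2 := by simp [tauC]

lemma tauC_im : (tauC q p).im = √(q - 1 / 4) := by simp [tauC]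

lemma conj_tauC : conj (tauC q p) = p - tauC q p := by
  apply Complex.ext <;> simp [tauC_re, tauC_im]; ring

lemma tauC_sq (hq : 2 ≤ q) (hp : p = -1 ∨ p = 1) : tauC q p ^ 2 = p * tauC q p - q := by
  have hq' : (2 : ℝ) ≤ q := by exact_mod_cast hq
  have hs : √((q : ℝ) - 1 / 4) ^ 2 = q - 1 / 4 := Real.sq_sqrt (by linarith)
  have hp2 : (p : ℝ) ^ 2 = 1 := by rcases hp with rfl | rfl <;> norm_num
  apply Complex.ext <;> simp [sq, tauC_re, tauC_im] <;> nlinarith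

lemma tauC_mul_conj (hq : 2 ≤ q) (hp : p = -1 ∨ p = 1) : tauC q p * conj (tauC q p) = q := by
  rw [conj_tauC]; linear_combination -tauC_sq hq hp

lemma norm_intCast_add_mul_tauC_sq (hq : 2 ≤ q) (hp : p = -1 ∨ p = 1) (m n : ℤ) :
    ‖(m : ℂ) + n * tauC q p‖ ^ 2 = m ^ 2 + p * m * n + q * n ^ 2 := by
  have h : ((m : ℂ) + n * tauC q p) * conj ((m : ℂ) + n * tauC q p)
      = ((m ^ 2 + p * m * n + q * n ^ 2 : ℤ) : ℂ) := by
    simp only [map_add, map_mul, map_intCast]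
    rw [conj_tauC]; push_cast; linear_combination (-(n:ℂ)^2) * tauC_sq hq hp
  rw [Complex.mul_conj, ← Complex.sq_norm] at h
  exact_mod_cast h

lemma norm_tauC_sq (hq : 2 ≤ q) (hp : p = -1 ∨ p = 1) : ‖tauC q p‖ ^ 2 = q := by
  simpa using norm_intCast_add_mul_tauC_sq hq hp 0 1

lemma tauC_ne_zero (hq : 2 ≤ q) (hp : p = -1 ∨ p = 1) : tauC q p ≠ 0 := by
  intro h
  have := norm_tauC_sq hq hp
  rw [h, norm_zero] at this
  have : (2 : ℝ) ≤ q := by exact_mod_cast hq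
  linarith

def tauSubring (hq : 2 ≤ q) (hp : p = -1 ∨ p = 1) : Subring ℂ where
  carrier := Ztau q p
  mul_mem' := by
    rintro _ _ ⟨a, b, rfl⟩ ⟨c, d, rfl⟩
    exact ⟨a * c - q * b * d, a * d + b * c + p * b * d, by
      push_cast; linear_combination (b * d : ℂ) * tauC_sq hq hp⟩
  one_mem' := ⟨1, 0, by simp⟩
  add_mem' := by
    rintro _ _ ⟨a, b, rfl⟩ ⟨c, d, rfl⟩
    exact ⟨a + c, b + d, by push_cast; ring⟩
  zero_mem' := ⟨0, 0, by simp⟩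
  neg_mem' := by
    rintro _ ⟨a, b, rfl⟩
    exact ⟨-a, -b, by push_cast; ring⟩

lemma tauC_mem_tauSubring (hq : 2 ≤ q) (hp : p = -1 ∨ p = 1) : tauC q p ∈ tauSubring hq hp :=
  ⟨0, 1, by simp⟩

lemma conj_tauC_mem_tauSubring (hq : 2 ≤ q) (hp : p = -1 ∨ p = 1) :
    conj (tauC q p) ∈ tauSubring hq hp := by
  rw [conj_tauC]
  exact sub_mem (intCast_mem _ p) (tauC_mem_tauSubring hq hp)

lemma intCast_add_mul_tauC_inj (hq : 2 ≤ q) {A B C D : ℤ}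
    (h : (A : ℂ) + B * tauC q p = C + D * tauC q p) : A = C ∧ B = D := by
  have hs : 0 < √((q : ℝ) - 1 / 4) := Real.sqrt_pos.mpr (by
    have : (2 : ℝ) ≤ q := by exact_mod_cast hq
    linarith)
  have him := congrArg Complex.im h
  have hre := congrArg Complex.re h
  simp only [Complex.add_re, Complex.add_im, Complex.mul_re, Complex.mul_im, Complex.intCast_re,
    Complex.intCast_im, tauC_re, tauC_im] at him hre
  have hBD : B = D := by
    have : (B : ℝ) = D := by nlinarith
    exact_mod_cast this
  subst hBD
  exact ⟨by exact_mod_cast (by linarith : (A : ℝ) = C), rfl⟩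

lemma not_tauDvd_of_not_dvd (hq : 2 ≤ q) (hp : p = -1 ∨ p = 1) {A : ℤ} (B : ℤ) (hA : ¬ q ∣ A) :
    ¬ tauPowDvd q p 1 (A + B * tauC q p) := by
  rintro ⟨_, ⟨m, n, rfl⟩, h⟩
  have h' : (A : ℂ) + B * tauC q p = ((-(q * n) : ℤ) : ℂ) + ((m + p * n : ℤ) : ℂ) * tauC q p := by
    rw [h]; push_cast; linear_combination n * tauC_sq hq hp
  exact hA ⟨-n, by linarith [(intCast_add_mul_tauC_inj hq h').1]⟩

lemma not_tauDvd_add (hq : 2 ≤ q) (hp : p = -1 ∨ p = 1) {a c : ℂ} (ha : ¬ tauPowDvd q p 1 a)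
    (hc : tauPowDvd q p 1 c) : ¬ tauPowDvd q p 1 (a + c) := by
  rintro ⟨u, hu, hac⟩
  obtain ⟨v, hv, rfl⟩ := hc
  exact ha ⟨u - v, (tauSubring hq hp).sub_mem hu hv, by linear_combination hac⟩

lemma eq_of_normForm_lt_four (hq : 2 ≤ q) (hp : p = -1 ∨ p = 1) {m n : ℤ}
    (h : m ^ 2 + p * m * n + q * n ^ 2 < 4) :
    (n = 0 ∧ (m = 0 ∨ m = 1 ∨ m = -1)) ∨ (n = 1 ∧ (m = 0 ∨ m = -p)) ∨
      (n = -1 ∧ (m = 0 ∨ m = p)) := by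
  rcases hp with rfl | rfl <;>
  · have hn : -1 ≤ n ∧ n ≤ 1 := by
      constructor <;> nlinarith [sq_nonneg (2 * m + n), sq_nonneg (2 * m - n)]
    obtain ⟨h1, h2⟩ := hn
    interval_cases n <;>
    · have hm : -2 ≤ m ∧ m ≤ 2 := by constructor <;> nlinarith
      obtain ⟨h3, h4⟩ := hm
      interval_cases m <;> omega

lemma eq_of_mem_Ztau_of_norm_lt_two (hq : 2 ≤ q) (hp : p = -1 ∨ p = 1) {y : ℂ}
    (hy : y ∈ Ztau q p) (h : ‖y‖ < 2) :
    y = 0 ∨ ∃ y₀ ∈ ({1, tauC q p, tauC q p - p} : Set ℂ), y = y₀ ∨ y = -y₀ := by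
  obtain ⟨m, n, rfl⟩ := hy
  have h4 : m ^ 2 + p * m * n + q * n ^ 2 < 4 := by
    have := norm_intCast_add_mul_tauC_sq hq hp m n
    have : ‖(m : ℂ) + n * tauC q p‖ ^ 2 < 4 := by nlinarith [norm_nonneg ((m : ℂ) + n * tauC q p)]
    exact_mod_cast (by push_cast; linarith : ((m ^ 2 + p * m * n + q * n ^ 2 : ℤ) : ℝ) < 4)
  rcases eq_of_normForm_lt_four hq hp h4 with
    ⟨rfl, rfl | rfl | rfl⟩ | ⟨rfl, rfl | rfl⟩ | ⟨rfl, rfl | hm⟩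
  · exact Or.inl (by simp)
  · exact Or.inr ⟨1, by simp, Or.inl (by simp)⟩
  · exact Or.inr ⟨1, by simp, Or.inr (by simp)⟩
  · exact Or.inr ⟨tauC q p, by simp, Or.inl (by simp)⟩
  · exact Or.inr ⟨tauC q p - p, by simp, Or.inl (by push_cast; ring)⟩
  · exact Or.inr ⟨tauC q p, by simp, Or.inr (by simp)⟩
  · exact Or.inr ⟨tauC q p - p, by simp, Or.inr (by rw [hm]; push_cast; ring)⟩

lemma mem_voronoiV_of (hq : 2 ≤ q) (hp : p = -1 ∨ p = 1) {x : ℂ} (hx : ‖x‖ ≤ 1)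
    (hstrip : ∀ y ∈ ({1, tauC q p, tauC q p - p} : Set ℂ), 2 * |⟪x, y⟫_ℝ| ≤ ‖y‖ ^ 2) :
    x ∈ VoronoiV q p := by
  intro y hy
  apply le_norm_sub_of_two_mul_inner_le
  by_cases hy2 : ‖y‖ < 2
  · rcases eq_of_mem_Ztau_of_norm_lt_two hq hp hy hy2 with rfl | ⟨y₀, hy₀, rfl | rfl⟩
    · simp
    · exact (mul_le_mul_of_nonneg_left (le_abs_self _) two_pos.le).trans (hstrip _ hy₀)
    · rw [inner_neg_right, norm_neg]
      exact (mul_le_mul_of_nonneg_left (neg_le_abs _) two_pos.le).trans (hstrip _ hy₀)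
  · calc 2 * ⟪x, y⟫_ℝ ≤ 2 * (‖x‖ * ‖y‖) := by gcongr; exact real_inner_le_norm x y
      _ ≤ ‖y‖ ^ 2 := by nlinarith [norm_nonneg x]

lemma isNonzeroDigit_of_div_mem_voronoiV (hq : 2 ≤ q) (hp : p = -1 ∨ p = 1) {w : ℕ} {a : ℂ}
    (ha : a ∈ Ztau q p) (hτa : ¬ tauPowDvd q p 1 a) (hV : a / tauC q p ^ w ∈ VoronoiV q p) :
    IsNonzeroDigit q p w a := by
  refine ⟨ha, hτa, fun y hy => ?_⟩
  have hτw : tauC q p ^ w ≠ 0 := pow_ne_zero _ (tauC_ne_zero hq hp)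
  have := mul_le_mul_of_nonneg_left (hV y hy) (norm_nonneg (tauC q p ^ w))
  rwa [← norm_mul, ← norm_mul, mul_sub, mul_div_cancel₀ _ hτw] at this

lemma mem_voronoiV_of_two_mul_eq (hq : 2 ≤ q) (hp : p = -1 ∨ p = 1) {x e c : ℂ} {δ : ℝ}
    (hx : 2 * x = e + c) (he : ‖e‖ ≤ δ) (hc : ‖c‖ + δ ≤ 2)
    (hstrip : ∀ y ∈ ({1, tauC q p, tauC q p - p} : Set ℂ), |⟪c, y⟫_ℝ| + δ * ‖y‖ ≤ ‖y‖ ^ 2) :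
    x ∈ VoronoiV q p := by
  have hx' : (2 : ℝ) • x = e + c := by rw [Complex.real_smul]; exact_mod_cast hx
  refine mem_voronoiV_of hq hp ?_ fun y hy =>
    two_mul_abs_inner_le_of_two_smul_eq hx' he (hstrip y hy)
  have : 2 * ‖x‖ ≤ ‖e‖ + ‖c‖ :=
    calc 2 * ‖x‖ = ‖e + c‖ := by rw [← hx, norm_mul]; norm_num
      _ ≤ ‖e‖ + ‖c‖ := norm_add_le e c
  linarith

lemma exists_not_dvd_of_abs_two_mul_add_le (hq : 2 ≤ q) (X : ℤ) :
    ∃ A, ¬ q ∣ A ∧ |2 * A + X| ≤ 2 := by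
  obtain ⟨A, hA⟩ : ∃ A, 2 * A + X = 0 ∨ 2 * A + X = -1 := ⟨-((X + 1) / 2), by omega⟩
  by_cases hqA : q ∣ A
  · refine ⟨A + 1, fun h => ?_, abs_le.mpr ⟨by omega, by omega⟩⟩
    have := Int.le_of_dvd one_pos ((Int.dvd_add_right hqA).mp h)
    omega
  · exact ⟨A, hqA, abs_le.mpr ⟨by omega, by omega⟩⟩

lemma norm_intCast_add_mul_tauC_sq_le (hq : 2 ≤ q) (hp : p = -1 ∨ p = 1) {E F : ℤ}
    (hE : |E| ≤ 2) (hF : |F| ≤ 1) : ‖(E : ℂ) + F * tauC q p‖ ^ 2 ≤ q + 6 := by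
  rw [norm_intCast_add_mul_tauC_sq hq hp]
  have : E ^ 2 + p * E * F + q * F ^ 2 ≤ q + 6 := by
    rw [abs_le] at hE hF
    obtain ⟨hE1, hE2⟩ := hE
    obtain ⟨hF1, hF2⟩ := hF
    rcases hp with rfl | rfl <;> interval_cases F <;> interval_cases E <;> omega
  exact_mod_cast this

theorem exists_isNonzeroDigit_pair (hq : 2 ≤ q) (hp : p = -1 ∨ p = 1) {w : ℕ} {c : ℂ}
    (hc : c ∈ Ztau q p) (hτc : tauPowDvd q p 1 c) {δ : ℝ} (hδ0 : 0 ≤ δ)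
    (hδ : q + 6 ≤ δ ^ 2 * q ^ w) (hnorm : ‖c / tauC q p ^ w‖ + δ ≤ 2)
    (hstrip : ∀ y ∈ ({1, tauC q p, tauC q p - p} : Set ℂ),
      |⟪c / tauC q p ^ w, y⟫_ℝ| + δ * ‖y‖ ≤ ‖y‖ ^ 2) :
    ∃ a, IsNonzeroDigit q p w a ∧ IsNonzeroDigit q p w (a + c) := by
  obtain ⟨X, Y, hXY⟩ := hc
  obtain ⟨A, hqA, hAX⟩ := exists_not_dvd_of_abs_two_mul_add_le hq X
  obtain ⟨B, hBY⟩ : ∃ B : ℤ, |2 * B + Y| ≤ 1 := ⟨-(Y / 2), abs_le.mpr ⟨by omega, by omega⟩⟩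
  set e : ℂ := ((2 * A + X : ℤ) : ℂ) + ((2 * B + Y : ℤ) : ℂ) * tauC q p with he_def
  have he : ‖e / tauC q p ^ w‖ ≤ δ := by
    rw [norm_div, norm_pow, div_le_iff₀ (pow_pos (norm_pos_iff.mpr (tauC_ne_zero hq hp)) w),
      ← pow_le_pow_iff_left₀ (norm_nonneg _) (by positivity) two_ne_zero, mul_pow, ← pow_mul,
      mul_comm w, pow_mul, norm_tauC_sq hq hp]
    exact (norm_intCast_add_mul_tauC_sq_le hq hp hAX hBY).trans hδ
  set a : ℂ := A + B * tauC q p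
  have ha : 2 * (a / tauC q p ^ w) = e / tauC q p ^ w + -(c / tauC q p ^ w) := by
    rw [← neg_div, ← add_div, mul_div_assoc', he_def, hXY]; push_cast; ring
  have hac : 2 * ((a + c) / tauC q p ^ w) = e / tauC q p ^ w + c / tauC q p ^ w := by
    rw [← add_div, mul_div_assoc', he_def, hXY]; push_cast; ring
  have hτa : ¬ tauPowDvd q p 1 a := not_tauDvd_of_not_dvd hq hp B hqA
  refine ⟨a, isNonzeroDigit_of_div_mem_voronoiV hq hp ⟨A, B, rfl⟩ hτa ?_,
    isNonzeroDigit_of_div_mem_voronoiV hq hp ((tauSubring hq hp).add_mem ⟨A, B, rfl⟩ ⟨X, Y, hXY⟩)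
      (not_tauDvd_add hq hp hτa hτc) (mem_voronoiV_of_two_mul_eq hq hp hac he hnorm hstrip)⟩
  refine mem_voronoiV_of_two_mul_eq hq hp ha he (by rwa [norm_neg]) fun y hy => ?_
  rw [inner_neg_left, abs_neg]
  exact hstrip y hy

lemma inner_conj_div_intCast (u y : ℂ) (n : ℤ) : ⟪conj u / n, y⟫_ℝ = (y * u).re / n := by
  rw [Complex.inner, map_div₀, Complex.conj_conj, map_intCast, mul_div_assoc',
    Complex.div_intCast_re]

lemma abs_intCast_eq_one (hp : p = -1 ∨ p = 1) : |(p : ℝ)| = 1 := by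
  rcases hp with rfl | rfl <;> norm_num

lemma norm_tauC_sub : ‖tauC q p - p‖ = ‖tauC q p‖ := by
  rw [← norm_neg, neg_sub, ← conj_tauC, Complex.norm_conj]

lemma tauC_sub_mul_tauC (hq : 2 ≤ q) (hp : p = -1 ∨ p = 1) : (tauC q p - p) * tauC q p = -q := by
  linear_combination tauC_sq hq hp

lemma re_tauC_sq (hq : 2 ≤ q) (hp : p = -1 ∨ p = 1) : (tauC q p ^ 2).re = 1 / 2 - q := by
  have hpp : (p : ℝ) * (p / 2) = 1 / 2 := by rcases hp with rfl | rfl <;> norm_num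
  simp [tauC_sq hq hp, tauC_re, hpp]

lemma re_tauC_pow_three (hq : 2 ≤ q) (hp : p = -1 ∨ p = 1) :
    (tauC q p ^ 3).re = p * ((1 - 3 * q) / 2) := by
  have hpp : (p : ℂ) ^ 2 = 1 := by rcases hp with rfl | rfl <;> norm_num
  rw [show tauC q p ^ 3 = (1 - q) * tauC q p - p * q by
    linear_combination (tauC q p + p) * tauC_sq hq hp + tauC q p * hpp]
  simp [tauC_re]
  ring

lemma tauC_pow_pred_div_tauC_pow (hq : 2 ≤ q) (hp : p = -1 ∨ p = 1) {w : ℕ} (hw : 1 ≤ w) :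
    tauC q p ^ (w - 1) / tauC q p ^ w = conj (tauC q p) / q := by
  have hw1 : tauC q p ^ w = tauC q p ^ (w - 1) * tauC q p := by
    rw [← pow_succ, Nat.sub_add_cancel hw]
  rw [div_eq_div_iff (pow_ne_zero _ (tauC_ne_zero hq hp)) (by exact_mod_cast (by omega : q ≠ 0)),
    hw1]
  linear_combination (-tauC q p ^ (w - 1)) * tauC_mul_conj hq hp

lemma tauPowDvd_tauC_pow_pred (hq : 2 ≤ q) (hp : p = -1 ∨ p = 1) {w : ℕ} (hw : 2 ≤ w) :
    tauPowDvd q p 1 (tauC q p ^ (w - 1)) :=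
  ⟨tauC q p ^ (w - 2), (tauSubring hq hp).pow_mem (tauC_mem_tauSubring hq hp) _, by
    rw [pow_one, ← pow_succ']; congr 1; omega⟩

lemma tauPowDvd_mul_left (hq : 2 ≤ q) (hp : p = -1 ∨ p = 1) {c d : ℂ} (hd : d ∈ Ztau q p)
    (hc : tauPowDvd q p 1 c) : tauPowDvd q p 1 (d * c) := by
  obtain ⟨u, hu, rfl⟩ := hc
  exact ⟨d * u, (tauSubring hq hp).mul_mem hd hu, by ring⟩

theorem exists_isNonzeroDigit_add_tauC_pow (hq : 2 ≤ q) (hp : p = -1 ∨ p = 1) {w : ℕ}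
    (hw : 2 ≤ w) (h : 9 * (q + 6) ≤ 4 * q ^ w) :
    ∃ a, IsNonzeroDigit q p w a ∧ IsNonzeroDigit q p w (a + tauC q p ^ (w - 1)) := by
  have hr := norm_tauC_sq hq hp
  have hq' : (2 : ℝ) ≤ q := by exact_mod_cast hq
  have hr1 : 2 / 3 * ‖tauC q p‖ + 1 ≤ q := by nlinarith [sq_nonneg (‖tauC q p‖ - 3 / 2)]
  refine exists_isNonzeroDigit_pair hq hp (δ := 2 / 3)
    ((tauSubring hq hp).pow_mem (tauC_mem_tauSubring hq hp) _)
    (tauPowDvd_tauC_pow_pred hq hp hw) (by norm_num)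
    (by have : (9 * (q + 6) : ℝ) ≤ 4 * q ^ w := by exact_mod_cast h
        linarith) ?_ ?_ <;>
    rw [tauC_pow_pred_div_tauC_pow hq hp (by omega)]
  · rw [norm_div, Complex.norm_conj, Complex.norm_intCast, abs_of_pos (by linarith),
      div_add' _ _ _ (by positivity), div_le_iff₀ (by positivity)]
    nlinarith [norm_nonneg (tauC q p)]
  · intro y hy
    rw [inner_conj_div_intCast]
    simp only [Set.mem_insert_iff, Set.mem_singleton_iff] at hy
    rcases hy with rfl | rfl | rfl
    · rw [one_mul, tauC_re, norm_one, abs_div, abs_div, abs_intCast_eq_one hp, abs_two,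
        abs_of_pos (by linarith)]
      field_simp
      nlinarith
    · rw [← sq, re_tauC_sq hq hp, abs_div, abs_of_pos (by linarith : (0 : ℝ) < q),
        abs_of_neg (by linarith), div_add' _ _ _ (by positivity), div_le_iff₀ (by positivity)]
      nlinarith
    · rw [tauC_sub_mul_tauC hq hp, norm_tauC_sub, Complex.neg_re, Complex.intCast_re, neg_div,
        div_self (by positivity), abs_neg, abs_one]
      linarith

theorem exists_isNonzeroDigit_add_conj_mul_tauC_pow (hq : 2 ≤ q) (hp : p = -1 ∨ p = 1) {w : ℕ}
    (hw : 2 ≤ w) (h : 4 * q ^ 2 * (q + 6) ≤ q ^ w) :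
    ∃ b, IsNonzeroDigit q p w b ∧
      IsNonzeroDigit q p w (b + conj (tauC q p) * tauC q p ^ (w - 1)) := by
  have hr := norm_tauC_sq hq hp
  have hq' : (2 : ℝ) ≤ q := by exact_mod_cast hq
  have hrq : ‖tauC q p‖ ≤ q := by nlinarith [norm_nonneg (tauC q p)]
  have hc : conj (tauC q p) * tauC q p ^ (w - 1) / tauC q p ^ w = conj (tauC q p ^ 2) / q := by
    rw [mul_div_assoc, tauC_pow_pred_div_tauC_pow hq hp (by omega), mul_div_assoc', ← map_mul, sq]
  -- the strip for `y = 1` is tight: it forces `δ ≤ 1 / (2q)`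
  refine exists_isNonzeroDigit_pair hq hp (δ := 1 / (2 * q))
    ((tauSubring hq hp).mul_mem (conj_tauC_mem_tauSubring hq hp)
      ((tauSubring hq hp).pow_mem (tauC_mem_tauSubring hq hp) _))
    (tauPowDvd_mul_left hq hp (conj_tauC_mem_tauSubring hq hp) (tauPowDvd_tauC_pow_pred hq hp hw))
    (by positivity) ?_ ?_ ?_
  · have : (4 * q ^ 2 * (q + 6) : ℝ) ≤ q ^ w := by exact_mod_cast h
    rw [div_pow, div_mul_eq_mul_div, le_div_iff₀ (by positivity)]
    nlinarith
  · rw [hc, norm_div, Complex.norm_conj, norm_pow, hr, Complex.norm_intCast,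
      abs_of_pos (by linarith), div_self (by positivity)]
    have : 1 / (2 * (q : ℝ)) ≤ 1 := by rw [div_le_one (by positivity)]; linarith
    linarith
  · intro y hy
    rw [hc, inner_conj_div_intCast]
    simp only [Set.mem_insert_iff, Set.mem_singleton_iff] at hy
    rcases hy with rfl | rfl | rfl
    · rw [one_mul, re_tauC_sq hq hp, norm_one, abs_div, abs_of_pos (by linarith : (0 : ℝ) < q),
        abs_of_neg (by linarith)]
      field_simp
      linarith
    · rw [← pow_succ', re_tauC_pow_three hq hp, abs_div, abs_mul, abs_intCast_eq_one hp,
        abs_of_pos (by linarith : (0 : ℝ) < q), abs_div, abs_of_neg (by linarith), abs_two]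
      field_simp
      nlinarith
    · rw [sq, ← mul_assoc, tauC_sub_mul_tauC hq hp, norm_tauC_sub,
        show (-(q : ℂ) * tauC q p).re = p * (-q / 2) by simp [tauC_re]; ring, abs_div, abs_mul,
        abs_intCast_eq_one hp, abs_of_pos (by linarith : (0 : ℝ) < q), abs_div, abs_neg,
        abs_of_pos (by linarith), abs_two]
      field_simp
      nlinarith

end TauAdic

/-- existence of compensating changes in the least significant
digit. -/
theorem stmt18 (q p : ℤ) (hq : 2 ≤ q) (hp : p = -1 ∨ p = 1) (w : ℕ) (hw : 2 ≤ w) :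
    ((5 ≤ w ∨ 5 ≤ q) →
      ∃ a : ℂ, IsNonzeroDigit q p w a ∧
        IsNonzeroDigit q p w (a + (tauC q p) ^ (w - 1))) ∧
    (((4 ≤ w ∧ 11 ≤ q) ∨ 8 ≤ w) →
      ∃ b : ℂ, IsNonzeroDigit q p w b ∧
        IsNonzeroDigit q p w (b + (starRingEnd ℂ) (tauC q p) * (tauC q p) ^ (w - 1))) := by
  have hq1 : 1 ≤ q := by omega
  have hq4 : 16 ≤ q ^ 4 := by nlinarith [pow_le_pow_left₀ (by norm_num) hq 4]
  refine ⟨fun h => TauAdic.exists_isNonzeroDigit_add_tauC_pow hq hp hw ?_,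
    fun h => TauAdic.exists_isNonzeroDigit_add_conj_mul_tauC_pow hq hp hw ?_⟩
  · rcases h with h | h
    · have := pow_le_pow_right₀ hq1 h
      nlinarith
    · have := pow_le_pow_right₀ hq1 hw
      nlinarith
  · rcases h with ⟨h, h11⟩ | h
    · have := pow_le_pow_right₀ hq1 h
      nlinarith
    · have := pow_le_pow_right₀ hq1 h
      have h8 : q ^ 8 = q ^ 4 * q ^ 4 := by ring
      nlinarith [sq_nonneg q, mul_le_mul_of_nonneg_left hq4 (by positivity : (0 : ℤ) ≤ q ^ 4)]
end
end
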